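/- arXiv:2012.14362 — 5 statements merged into one kernel-verified Lean document; each statement's English description precedes it below -/
import Mathlib

section
/- Let 𝓗 be a complex Hilbert space, let U : ℝ → (𝓗 →L[ℂ] 𝓗) be such that each U(t) is unitary and for each ψ ∈ 𝓗 the map t ↦ U(t)ψ is continuous. Let w : 𝓗 →L[ℂ] 𝓗 be a bounded operator and c ≥ 0 a constant such that the local decay estimate ∫₀^∞ ‖w(U(t)ψ)‖² dt ≤ c‖ψ‖² holds for every ψ ∈ 𝓗. Let Q₀ : 𝓗 →L[ℂ] 𝓗 be bounded. Then there exists a bounded operator B : 𝓗 →L[ℂ] 𝓗 with ‖B‖ ≤ c‖Q₀‖ such that for all ψ, φ ∈ 𝓗 the function s ↦ ⟪w(U(s)ψ), Q₀(w(U(s)φ))⟫ is integrable on [0,∞) and ⟪ψ, Bφ⟫ = −∫₀^∞ ⟪w(U(s)ψ), Q₀(w(U(s)φ))⟫ ds. Moreover, if Q₀ is self-adjoint then B is self-adjoint, and if Re⟪φ, Q₀φ⟫ ≤ 0 for all φ then Re⟪φ, Bφ⟫ ≥ 0 for all φ. -/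
/-!
Local decay says exactly that `ψ ↦ w U(·) ψ` is a bounded map `T : 𝓗 → L²((0, ∞); 𝓗)` with
`‖T‖² ≤ c`. Then `B = -T† (Q₀)_* T`, where `(Q₀)_*` applies `Q₀` pointwise on `L²`: its
sesquilinear form is the integral of the statement, and the norm bound, self-adjointness and
sign of `B` are inherited from `Q₀` through the conjugation by `T`.
-/

open MeasureTheory

namespace MeasureTheory

variable {α 𝕜 E F : Type*} [RCLike 𝕜] [MeasurableSpace α] {μ : Measure α}
  [NormedAddCommGroup E] [InnerProductSpace 𝕜 E] [NormedAddCommGroup F] [InnerProductSpace 𝕜 F]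

theorem L2.sq_norm_toLp {f : α → F} (hf : MemLp f 2 μ) :
    ‖hf.toLp f‖ ^ 2 = ∫ a, ‖f a‖ ^ 2 ∂μ := by
  rw [Lp.norm_toLp, hf.eLpNorm_eq_integral_rpow_norm two_ne_zero ENNReal.ofNat_ne_top,
    ENNReal.toReal_ofReal (by positivity)]
  simp only [ENNReal.toReal_ofNat, Real.rpow_two]
  rw [← Real.rpow_natCast, ← Real.rpow_mul (integral_nonneg fun a => sq_nonneg _)]
  norm_num

theorem exists_clm_toL2_of_integral_norm_sq_le {A : α → E →L[𝕜] F}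
    (hA : ∀ x, MemLp (fun a => A a x) 2 μ) {C : ℝ}
    (hC : ∀ x, ∫ a, ‖A a x‖ ^ 2 ∂μ ≤ C * ‖x‖ ^ 2) :
    ∃ T : E →L[𝕜] Lp F 2 μ, ‖T‖ ≤ √C ∧ ∀ x, T x =ᵐ[μ] fun a => A a x := by
  let T : E →ₗ[𝕜] Lp F 2 μ :=
    { toFun := fun x => (hA x).toLp _
      map_add' := fun x y =>
        ((hA _).toLp_congr ((hA x).add (hA y))
          (.of_forall fun a => map_add (A a) x y)).trans ((hA x).toLp_add (hA y))
      map_smul' := fun r x =>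
        ((hA _).toLp_congr ((hA x).const_smul r)
          (.of_forall fun a => map_smul (A a) r x)).trans ((hA x).toLp_const_smul r) }
  have hT : ∀ x, ‖T x‖ ≤ √C * ‖x‖ := fun x => by
    rw [← Real.sqrt_sq (norm_nonneg (T x)), ← Real.sqrt_sq (norm_nonneg x),
      ← Real.sqrt_mul' _ (sq_nonneg _)]
    exact Real.sqrt_le_sqrt ((L2.sq_norm_toLp (hA x)).trans_le (hC x))
  exact ⟨T.mkContinuous √C hT, LinearMap.mkContinuous_norm_le _ (Real.sqrt_nonneg C) _,
    fun x => (hA x).coeFn_toLp⟩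

section compLpL

variable (L : F →L[𝕜] E)

theorem L2.inner_compLpL_ae_eq {f : Lp E 2 μ} {g : Lp F 2 μ} {f₀ : α → E} {g₀ : α → F}
    (hf : f =ᵐ[μ] f₀) (hg : g =ᵐ[μ] g₀) :
    (fun a => inner 𝕜 (f a) (L.compLpL 2 μ g a)) =ᵐ[μ] fun a => inner 𝕜 (f₀ a) (L (g₀ a)) := by
  filter_upwards [hf, hg, L.coeFn_compLpL g] with a hfa hga hLa
  rw [hLa, hfa, hga]

theorem L2.integrable_inner_compLpL_of_ae_eq {f : Lp E 2 μ} {g : Lp F 2 μ} {f₀ : α → E}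
    {g₀ : α → F} (hf : f =ᵐ[μ] f₀) (hg : g =ᵐ[μ] g₀) :
    Integrable (fun a => inner 𝕜 (f₀ a) (L (g₀ a))) μ :=
  (L2.integrable_inner f _).congr (L2.inner_compLpL_ae_eq L hf hg)

theorem L2.inner_compLpL_eq_integral_of_ae_eq {f : Lp E 2 μ} {g : Lp F 2 μ} {f₀ : α → E}
    {g₀ : α → F} (hf : f =ᵐ[μ] f₀) (hg : g =ᵐ[μ] g₀) :
    inner 𝕜 f (L.compLpL 2 μ g) = ∫ a, inner 𝕜 (f₀ a) (L (g₀ a)) ∂μ :=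
  integral_congr_ae (L2.inner_compLpL_ae_eq L hf hg)

end compLpL

theorem _root_.IsSelfAdjoint.compLpL [CompleteSpace E] {L : E →L[𝕜] E}
    (hL : IsSelfAdjoint L) : IsSelfAdjoint (L.compLpL 2 μ) := by
  rw [ContinuousLinearMap.isSelfAdjoint_iff_isSymmetric]
  intro f g
  change inner 𝕜 (L.compLpL 2 μ f) g = inner 𝕜 f (L.compLpL 2 μ g)
  rw [← inner_conj_symm, L2.inner_compLpL_eq_integral_of_ae_eq L .rfl .rfl, ← integral_conj,
    L2.inner_compLpL_eq_integral_of_ae_eq L .rfl .rfl]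
  congr 1 with a
  rw [inner_conj_symm]
  exact hL.isSymmetric _ _

theorem _root_.ContinuousLinearMap.re_inner_compLpL_self_nonpos (L : E →L[𝕜] E)
    (hL : ∀ x, RCLike.re (inner 𝕜 x (L x)) ≤ 0) (f : Lp E 2 μ) :
    RCLike.re (inner 𝕜 f (L.compLpL 2 μ f)) ≤ 0 := by
  rw [L2.inner_compLpL_eq_integral_of_ae_eq L .rfl .rfl,
    ← integral_re (L2.integrable_inner_compLpL_of_ae_eq L .rfl .rfl)]
  exact integral_nonpos fun a => hL (f a)

end MeasureTheory

theorem ContinuousLinearMap.norm_adjoint_conj_le {𝕜 E F : Type*} [RCLike 𝕜]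
    [NormedAddCommGroup E] [InnerProductSpace 𝕜 E] [CompleteSpace E]
    [NormedAddCommGroup F] [InnerProductSpace 𝕜 F] [CompleteSpace F]
    (M : E →L[𝕜] E) (S : F →L[𝕜] E) : ‖S.adjoint ∘L M ∘L S‖ ≤ ‖M‖ * ‖S‖ ^ 2 :=
  calc ‖S.adjoint ∘L M ∘L S‖ ≤ ‖S.adjoint‖ * (‖M‖ * ‖S‖) :=
        (opNorm_comp_le _ _).trans (by gcongr; exact opNorm_comp_le _ _)
    _ = ‖M‖ * ‖S‖ ^ 2 := by rw [LinearIsometryEquiv.norm_map]; ring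

theorem adaptor_operator_exists_general
    {𝓗 : Type*} [NormedAddCommGroup 𝓗] [InnerProductSpace ℂ 𝓗] [CompleteSpace 𝓗]
    (U : ℝ → 𝓗 →L[ℂ] 𝓗)
    (hUcont : ∀ ψ : 𝓗, Continuous fun t => U t ψ)
    (w : 𝓗 →L[ℂ] 𝓗) (c : ℝ) (hc : 0 ≤ c)
    (hLDint : ∀ ψ : 𝓗, IntegrableOn (fun t => ‖w (U t ψ)‖ ^ 2) (Set.Ioi (0 : ℝ)))
    (hLD : ∀ ψ : 𝓗, ∫ t in Set.Ioi (0 : ℝ), ‖w (U t ψ)‖ ^ 2 ≤ c * ‖ψ‖ ^ 2)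
    (Q₀ : 𝓗 →L[ℂ] 𝓗) :
    ∃ B : 𝓗 →L[ℂ] 𝓗, ‖B‖ ≤ c * ‖Q₀‖ ∧
      (∀ ψ φ : 𝓗,
        IntegrableOn (fun s => (inner ℂ (w (U s ψ)) (Q₀ (w (U s φ))) : ℂ))
          (Set.Ioi (0 : ℝ)) ∧
        (inner ℂ ψ (B φ) : ℂ)
          = -∫ s in Set.Ioi (0 : ℝ), (inner ℂ (w (U s ψ)) (Q₀ (w (U s φ))) : ℂ)) ∧
      (IsSelfAdjoint Q₀ → IsSelfAdjoint B) ∧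
      ((∀ φ : 𝓗, (inner ℂ φ (Q₀ φ) : ℂ).re ≤ 0) →
        ∀ φ : 𝓗, 0 ≤ (inner ℂ φ (B φ) : ℂ).re) := by
  have hmem (ψ : 𝓗) : MemLp (fun t => (w ∘L U t) ψ) 2 (volume.restrict (Set.Ioi 0)) :=
    (memLp_two_iff_integrable_sq_norm (w.continuous.comp (hUcont ψ)).aestronglyMeasurable).2
      (hLDint ψ)
  obtain ⟨T, hT_norm, hT⟩ := exists_clm_toL2_of_integral_norm_sq_le hmem hLD
  have hT_sq : ‖T‖ ^ 2 ≤ c := (Real.le_sqrt (norm_nonneg T) hc).1 hT_norm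
  refine ⟨-(T.adjoint ∘L Q₀.compLpL 2 _ ∘L T), ?_, fun ψ φ => ⟨?_, ?_⟩, fun hQ => ?_,
    fun hQ φ => ?_⟩
  · rw [norm_neg]
    calc _ ≤ ‖Q₀.compLpL 2 _‖ * ‖T‖ ^ 2 := (Q₀.compLpL 2 _).norm_adjoint_conj_le T
      _ ≤ ‖Q₀‖ * c := by gcongr; exact Q₀.norm_compLpL_le
      _ = c * ‖Q₀‖ := mul_comm _ _
  · exact L2.integrable_inner_compLpL_of_ae_eq Q₀ (hT ψ) (hT φ)
  · rw [neg_apply, inner_neg_right, ContinuousLinearMap.comp_apply,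
      ContinuousLinearMap.comp_apply, ContinuousLinearMap.adjoint_inner_right,
      L2.inner_compLpL_eq_integral_of_ae_eq Q₀ (hT ψ) (hT φ)]
    rfl
  · exact (hQ.compLpL.adjoint_conj T).neg
  · rw [neg_apply, inner_neg_right, ContinuousLinearMap.comp_apply,
      ContinuousLinearMap.comp_apply, ContinuousLinearMap.adjoint_inner_right,
      Complex.neg_re, neg_nonneg]
    exact Q₀.re_inner_compLpL_self_nonpos hQ (T φ)

/-- Construction of the adaptor operator
`B = ∫₀^∞ U(s)* (−w Q₀ w) U(s) ds` from a local decay estimate: given a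
continuous unitary family `U(t)`, a weight `w` satisfying the local decay
estimate `∫₀^∞ ‖w U(t) ψ‖² dt ≤ c‖ψ‖²`, and a bounded `Q₀`, there is a bounded
operator `B` with `‖B‖ ≤ c‖Q₀‖` whose sesquilinear form is
`⟪ψ, Bφ⟫ = −∫₀^∞ ⟪w U(s) ψ, Q₀ w U(s) φ⟫ ds`; moreover `B` is self-adjoint if
`Q₀` is, and `B ≥ 0` if `Re⟪φ, Q₀ φ⟫ ≤ 0` for all `φ`. -/
theorem adaptor_operator_exists
    {𝓗 : Type*} [NormedAddCommGroup 𝓗] [InnerProductSpace ℂ 𝓗] [CompleteSpace 𝓗]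
    (U : ℝ → 𝓗 →L[ℂ] 𝓗)
    (hUunit : ∀ t, U t ∈ unitary (𝓗 →L[ℂ] 𝓗))
    (hUcont : ∀ ψ : 𝓗, Continuous fun t => U t ψ)
    (w : 𝓗 →L[ℂ] 𝓗) (c : ℝ) (hc : 0 ≤ c)
    (hLDint : ∀ ψ : 𝓗, IntegrableOn (fun t => ‖w (U t ψ)‖ ^ 2) (Set.Ioi (0 : ℝ)))
    (hLD : ∀ ψ : 𝓗, ∫ t in Set.Ioi (0 : ℝ), ‖w (U t ψ)‖ ^ 2 ≤ c * ‖ψ‖ ^ 2)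
    (Q₀ : 𝓗 →L[ℂ] 𝓗) :
    ∃ B : 𝓗 →L[ℂ] 𝓗, ‖B‖ ≤ c * ‖Q₀‖ ∧
      (∀ ψ φ : 𝓗,
        IntegrableOn (fun s => (inner ℂ (w (U s ψ)) (Q₀ (w (U s φ))) : ℂ))
          (Set.Ioi (0 : ℝ)) ∧
        (inner ℂ ψ (B φ) : ℂ)
          = -∫ s in Set.Ioi (0 : ℝ), (inner ℂ (w (U s ψ)) (Q₀ (w (U s φ))) : ℂ)) ∧
      (IsSelfAdjoint Q₀ → IsSelfAdjoint B) ∧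
      ((∀ φ : 𝓗, (inner ℂ φ (Q₀ φ) : ℂ).re ≤ 0) →
        ∀ φ : 𝓗, 0 ≤ (inner ℂ φ (B φ) : ℂ).re) :=
  adaptor_operator_exists_general U hUcont w c hc hLDint hLD Q₀
end

section
/- Let 𝓗 be a complex Hilbert space, let U : ℝ → (𝓗 →L[ℂ] 𝓗) be such that each U(t) is unitary, U(t+s) = U(t) ∘ U(s) for all t, s, and for each ψ ∈ 𝓗 the map t ↦ U(t)ψ is continuous. Let w, Q₀ : 𝓗 →L[ℂ] 𝓗 be bounded, and let B : 𝓗 →L[ℂ] 𝓗 be a bounded operator satisfying ⟪ψ, Bφ⟫ = −∫₀^∞ ⟪w(U(s)ψ), Q₀(w(U(s)φ))⟫ ds for all ψ, φ ∈ 𝓗 (the integrand being integrable on [0,∞)). Suppose ψ ∈ 𝓗 and C ≥ 0 are such that ‖w(U(r)ψ)‖ ≤ C(1+r)^{−1} for all r ≥ 0. Then for every t ≥ 0, |⟪U(t)ψ, B(U(t)ψ)⟫| ≤ ‖Q₀‖ C² / (1+t). -/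
/-!
Since `U s (U t ψ) = U (s + t) ψ`, the decay hypothesis bounds the integrand defining
`⟪U t ψ, B (U t ψ)⟫` by `‖Q₀‖ C² (s + 1 + t)⁻²`, and `∫₀^∞ (s + a)⁻² ds = a⁻¹`.
-/

open MeasureTheory Set Filter Topology

theorem ContinuousLinearMap.norm_inner_apply_self_le {𝕜 E : Type*} [RCLike 𝕜]
    [NormedAddCommGroup E] [InnerProductSpace 𝕜 E] (T : E →L[𝕜] E) (x : E) :
    ‖(inner 𝕜 x (T x) : 𝕜)‖ ≤ ‖T‖ * ‖x‖ ^ 2 :=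
  calc ‖(inner 𝕜 x (T x) : 𝕜)‖ ≤ ‖x‖ * ‖T x‖ := norm_inner_le_norm _ _
    _ ≤ ‖x‖ * (‖T‖ * ‖x‖) := by gcongr; exact T.le_opNorm x
    _ = ‖T‖ * ‖x‖ ^ 2 := by ring

theorem hasDerivAt_neg_inv_add {a x : ℝ} (hx : x + a ≠ 0) :
    HasDerivAt (fun s => -(s + a)⁻¹) ((x + a)⁻¹ ^ 2) x := by
  refine (((hasDerivAt_id' x).add_const a).fun_inv hx).fun_neg.congr_deriv ?_
  simp [div_eq_mul_inv, inv_pow]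

theorem tendsto_neg_inv_add_atTop_zero (a : ℝ) :
    Tendsto (fun s : ℝ => -(s + a)⁻¹) atTop (𝓝 0) := by
  simpa using (tendsto_inv_atTop_zero.comp (tendsto_atTop_add_const_right _ a tendsto_id)).neg

theorem integrableOn_Ioi_inv_add_sq {a : ℝ} (ha : 0 < a) :
    IntegrableOn (fun s => (s + a)⁻¹ ^ 2) (Ioi 0) :=
  integrableOn_Ioi_deriv_of_nonneg'
    (fun x hx => hasDerivAt_neg_inv_add (by linarith [mem_Ici.1 hx])) (fun _ _ => sq_nonneg _)
    (tendsto_neg_inv_add_atTop_zero a)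

theorem integral_Ioi_inv_add_sq {a : ℝ} (ha : 0 < a) :
    ∫ s in Ioi 0, (s + a)⁻¹ ^ 2 = a⁻¹ := by
  rw [integral_Ioi_of_hasDerivAt_of_nonneg'
    (fun x hx => hasDerivAt_neg_inv_add (by linarith [mem_Ici.1 hx])) (fun _ _ => sq_nonneg _)
    (tendsto_neg_inv_add_atTop_zero a)]
  simp

theorem norm_setIntegral_Ioi_le_of_norm_le_inv_add_sq {E : Type*} [NormedAddCommGroup E]
    [NormedSpace ℝ E] {f : ℝ → E} {K a : ℝ} (ha : 0 < a)
    (hf : ∀ s ∈ Ioi (0 : ℝ), ‖f s‖ ≤ K * (s + a)⁻¹ ^ 2) :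
    ‖∫ s in Ioi 0, f s‖ ≤ K / a :=
  calc ‖∫ s in Ioi 0, f s‖ ≤ ∫ s in Ioi 0, K * (s + a)⁻¹ ^ 2 :=
        norm_integral_le_of_norm_le ((integrableOn_Ioi_inv_add_sq ha).const_mul K)
          ((ae_restrict_iff' measurableSet_Ioi).2 (Eventually.of_forall hf))
    _ = K / a := by rw [integral_const_mul, integral_Ioi_inv_add_sq ha, div_eq_mul_inv]

theorem adaptor_expectation_decay_general
    {𝓗 : Type*} [NormedAddCommGroup 𝓗] [InnerProductSpace ℂ 𝓗]
    (U : ℝ → 𝓗 →L[ℂ] 𝓗)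
    (hUgroup : ∀ t s : ℝ, U (t + s) = (U t).comp (U s))
    (w Q₀ : 𝓗 →L[ℂ] 𝓗) (B : 𝓗 →L[ℂ] 𝓗)
    (hB : ∀ ψ φ : 𝓗, (inner ℂ ψ (B φ) : ℂ)
      = -∫ s in Set.Ioi (0 : ℝ), (inner ℂ (w (U s ψ)) (Q₀ (w (U s φ))) : ℂ))
    (ψ : 𝓗) (C : ℝ)
    (hdecay : ∀ r : ℝ, 0 ≤ r → ‖w (U r ψ)‖ ≤ C * (1 + r)⁻¹) :
    ∀ t : ℝ, 0 ≤ t →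
      ‖(inner ℂ (U t ψ) (B (U t ψ)) : ℂ)‖ ≤ ‖Q₀‖ * C ^ 2 / (1 + t) := by
  intro t ht
  have hshifted : ∀ s ∈ Ioi (0 : ℝ), ‖w (U s (U t ψ))‖ ≤ C * (s + (1 + t))⁻¹ := by
    intro s hs
    have := hdecay (s + t) (by linarith [mem_Ioi.1 hs])
    rwa [hUgroup, show 1 + (s + t) = s + (1 + t) by ring] at this
  rw [hB, norm_neg]
  refine norm_setIntegral_Ioi_le_of_norm_le_inv_add_sq (by linarith) fun s hs => ?_
  calc _ ≤ ‖Q₀‖ * ‖w (U s (U t ψ))‖ ^ 2 := Q₀.norm_inner_apply_self_le _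
    _ ≤ ‖Q₀‖ * (C * (s + (1 + t))⁻¹) ^ 2 := by gcongr; exact hshifted s hs
    _ = ‖Q₀‖ * C ^ 2 * (s + (1 + t))⁻¹ ^ 2 := by ring

/-- Decay of the adaptor-operator expectation value: if
`⟪ψ, Bφ⟫ = −∫₀^∞ ⟪w U(s) ψ, Q₀ w U(s) φ⟫ ds` for a unitary group `U`, and the
pointwise weighted decay `‖w U(r) ψ‖ ≤ C(1+r)⁻¹` holds for `r ≥ 0`, then
`|⟪U(t)ψ, B U(t)ψ⟫| ≤ ‖Q₀‖ C² / (1+t)` for all `t ≥ 0`. -/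
theorem adaptor_expectation_decay
    {𝓗 : Type*} [NormedAddCommGroup 𝓗] [InnerProductSpace ℂ 𝓗] [CompleteSpace 𝓗]
    (U : ℝ → 𝓗 →L[ℂ] 𝓗)
    (hUunit : ∀ t, U t ∈ unitary (𝓗 →L[ℂ] 𝓗))
    (hUgroup : ∀ t s : ℝ, U (t + s) = (U t).comp (U s))
    (hUcont : ∀ ψ : 𝓗, Continuous fun t => U t ψ)
    (w Q₀ : 𝓗 →L[ℂ] 𝓗) (B : 𝓗 →L[ℂ] 𝓗)
    (hBint : ∀ ψ φ : 𝓗,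
      IntegrableOn (fun s => (inner ℂ (w (U s ψ)) (Q₀ (w (U s φ))) : ℂ))
        (Set.Ioi (0 : ℝ)))
    (hB : ∀ ψ φ : 𝓗, (inner ℂ ψ (B φ) : ℂ)
      = -∫ s in Set.Ioi (0 : ℝ), (inner ℂ (w (U s ψ)) (Q₀ (w (U s φ))) : ℂ))
    (ψ : 𝓗) (C : ℝ) (hC : 0 ≤ C)
    (hdecay : ∀ r : ℝ, 0 ≤ r → ‖w (U r ψ)‖ ≤ C * (1 + r)⁻¹) :
    ∀ t : ℝ, 0 ≤ t →
      ‖(inner ℂ (U t ψ) (B (U t ψ)) : ℂ)‖ ≤ ‖Q₀‖ * C ^ 2 / (1 + t) :=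
  adaptor_expectation_decay_general U hUgroup w Q₀ B hB ψ C hdecay
end

section
/- Let n ≥ 3 and let f : ℝⁿ → ℂ be a Schwartz function. Then ∫_{ℝⁿ} |f(x)|²/‖x‖² dx ≤ (2/(n−2))² ∫_{ℝⁿ} ‖∇f(x)‖²_{ℂⁿ} dx. -/
/-!
For `ε > 0` put `w(x) = x / (‖x‖² + ε)`. This field is smooth and bounded with bounded
derivative, and `div w = (n (‖x‖² + ε) - 2 ‖x‖²) / (‖x‖² + ε)² ≥ (n - 2) / (‖x‖² + ε)`.
Integrating `‖f‖² div w` by parts gives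
`(n - 2) ∫ ‖f‖² / (‖x‖² + ε) ≤ -2 ∑ᵢ ∫ ⟪f, ∂ᵢ f⟫ wᵢ`, and pointwise
`-2t ⟪f, ∂ᵢ f⟫ wᵢ ≤ t² ‖f‖² wᵢ² + ‖∂ᵢ f‖²` with `‖w‖² ≤ 1 / (‖x‖² + ε)`.
Taking `t = (n - 2) / 2` yields `((n - 2) / 2)² ∫ ‖f‖² / (‖x‖² + ε) ≤ ∫ ‖∇f‖²`
uniformly in `ε`, and Fatou's lemma lets `ε → 0`.
-/

open MeasureTheory SchwartzMap

noncomputable section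

/-- Partial derivative in the `i`-th coordinate direction. -/
def pd {n : ℕ} (f : EuclideanSpace ℝ (Fin n) → ℂ) (i : Fin n)
    (x : EuclideanSpace ℝ (Fin n)) : ℂ :=
  fderiv ℝ f x (EuclideanSpace.single i 1)

open Filter Topology LineDeriv
open scoped InnerProductSpace

theorem integral_le_of_tendsto_of_integral_le {α ι : Type*} [MeasurableSpace α] {μ : Measure α}
    {l : Filter ι} [l.IsCountablyGenerated] [l.NeBot] {F : ι → α → ℝ} {h : α → ℝ} {C : ℝ}
    (hF_meas : ∀ i, AEStronglyMeasurable (F i) μ) (hF_int : ∀ᶠ i in l, Integrable (F i) μ)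
    (hF_nonneg : ∀ᶠ i in l, 0 ≤ᵐ[μ] F i) (h_nonneg : 0 ≤ᵐ[μ] h)
    (hF_tendsto : ∀ᵐ x ∂μ, Tendsto (fun i => F i x) l (𝓝 (h x)))
    (hF_le : ∀ᶠ i in l, ∫ x, F i x ∂μ ≤ C) :
    ∫ x, h x ∂μ ≤ C := by
  obtain ⟨i, hi_nonneg, hi_le⟩ := (hF_nonneg.and hF_le).exists
  have hC : 0 ≤ C := (integral_nonneg_of_ae hi_nonneg).trans hi_le
  rw [integral_eq_lintegral_of_nonneg_ae h_nonneg
    (aestronglyMeasurable_of_tendsto_ae l hF_meas hF_tendsto)]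
  refine ENNReal.toReal_le_of_le_ofReal hC ?_
  calc ∫⁻ x, ENNReal.ofReal (h x) ∂μ
      = ∫⁻ x, liminf (fun i => ENNReal.ofReal (F i x)) l ∂μ := by
        refine lintegral_congr_ae (hF_tendsto.mono fun x hx => ?_)
        exact ((ENNReal.continuous_ofReal.tendsto _).comp hx).liminf_eq.symm
    _ ≤ liminf (fun i => ∫⁻ x, ENNReal.ofReal (F i x) ∂μ) l :=
        lintegral_liminf_le' fun i => (hF_meas i).aemeasurable.ennreal_ofReal
    _ ≤ ENNReal.ofReal C := by
        refine liminf_le_of_frequently_le' (Eventually.frequently ?_)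
        filter_upwards [hF_int, hF_nonneg, hF_le] with i hi_int hi_nonneg hi_le
        rw [← ofReal_integral_eq_lintegral_ofReal hi_int hi_nonneg]
        exact ENNReal.ofReal_le_ofReal hi_le

theorem integral_mul_fderiv_eq_neg_fderiv_mul_of_bounded {E : Type*} [NormedAddCommGroup E]
    [NormedSpace ℝ E] [FiniteDimensional ℝ E] [MeasurableSpace E] [BorelSpace E]
    {μ : Measure E} [μ.IsAddHaarMeasure]
    {u g : E → ℝ} {v : E} {C C' : ℝ}
    (hu : Integrable u μ) (hu' : Integrable (fun x => fderiv ℝ u x v) μ)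
    (hu_diff : Differentiable ℝ u) (hg_diff : Differentiable ℝ g)
    (hg : ∀ x, |g x| ≤ C) (hg' : ∀ x, |fderiv ℝ g x v| ≤ C') :
    ∫ x, u x * fderiv ℝ g x v ∂μ = -∫ x, fderiv ℝ u x v * g x ∂μ :=
  integral_mul_fderiv_eq_neg_fderiv_mul_of_integrable
    (hu'.mul_bdd hg_diff.continuous.aestronglyMeasurable (ae_of_all _ hg))
    (hu.mul_bdd (measurable_fderiv_apply_const ℝ g v).aestronglyMeasurable (ae_of_all _ hg'))
    (hu.mul_bdd hg_diff.continuous.aestronglyMeasurable (ae_of_all _ hg))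
    (fun x _ => hu_diff x) (fun x _ => hg_diff x)

section RegularizedWeight

variable {ι : Type*} [Fintype ι] {ε : ℝ}

local notation "E" => EuclideanSpace ℝ ι

theorem hasFDerivAt_coord_div_norm_sq_add (hε : 0 < ε) (i : ι) (x : E) :
    HasFDerivAt (fun y : E => y i / (‖y‖ ^ 2 + ε))
      (x i • (-((‖x‖ ^ 2 + ε) ^ 2)⁻¹ • (2 : ℕ) • innerSL ℝ x) +
        (‖x‖ ^ 2 + ε)⁻¹ • EuclideanSpace.proj i) x := by
  have hinv : HasFDerivAt (fun y : E => (‖y‖ ^ 2 + ε)⁻¹)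
      (-((‖x‖ ^ 2 + ε) ^ 2)⁻¹ • (2 : ℕ) • innerSL ℝ x) x :=
    (hasDerivAt_inv (by positivity)).comp_hasFDerivAt x
      ((hasStrictFDerivAt_norm_sq x).hasFDerivAt.add_const ε)
  simp_rw [div_eq_mul_inv]
  exact (EuclideanSpace.proj i : E →L[ℝ] ℝ).hasFDerivAt.mul hinv

theorem differentiable_coord_div_norm_sq_add (hε : 0 < ε) (i : ι) :
    Differentiable ℝ (fun y : E => y i / (‖y‖ ^ 2 + ε)) :=
  fun x => (hasFDerivAt_coord_div_norm_sq_add hε i x).differentiableAt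

theorem fderiv_coord_div_norm_sq_add_single [DecidableEq ι] (hε : 0 < ε) (i : ι) (x : E) :
    fderiv ℝ (fun y : E => y i / (‖y‖ ^ 2 + ε)) x (EuclideanSpace.single i 1) =
      1 / (‖x‖ ^ 2 + ε) - 2 * x i ^ 2 / (‖x‖ ^ 2 + ε) ^ 2 := by
  have : 0 < ‖x‖ ^ 2 + ε := by positivity
  rw [(hasFDerivAt_coord_div_norm_sq_add hε i x).fderiv]
  simp [EuclideanSpace.inner_single_right]
  field_simp
  ring

theorem sq_coord_le_norm_sq (x : E) (i : ι) : x i ^ 2 ≤ ‖x‖ ^ 2 := by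
  simpa [sq_abs] using pow_le_pow_left₀ (abs_nonneg _) (PiLp.norm_apply_le x i) 2

theorem abs_coord_div_norm_sq_add_le (hε : 0 < ε) (x : E) (i : ι) :
    |x i / (‖x‖ ^ 2 + ε)| ≤ 1 / (2 * √ε) := by
  have hs : 0 < √ε := Real.sqrt_pos.2 hε
  have hr : 0 < ‖x‖ ^ 2 + ε := by positivity
  rw [abs_div, abs_of_pos hr, div_le_div_iff₀ hr (by positivity)]
  have hxi : |x i| ≤ ‖x‖ := by simpa using PiLp.norm_apply_le x i
  nlinarith [sq_nonneg (‖x‖ - √ε), Real.sq_sqrt hε.le]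

theorem abs_fderiv_coord_div_norm_sq_add_single_le [DecidableEq ι] (hε : 0 < ε) (x : E) (i : ι) :
    |fderiv ℝ (fun y : E => y i / (‖y‖ ^ 2 + ε)) x (EuclideanSpace.single i 1)| ≤ 1 / ε := by
  have hr : 0 < ‖x‖ ^ 2 + ε := by positivity
  have hxi := sq_coord_le_norm_sq x i
  have h2 : 2 * x i ^ 2 / (‖x‖ ^ 2 + ε) ^ 2 ≤ 2 / (‖x‖ ^ 2 + ε) := by
    rw [div_le_div_iff₀ (by positivity) hr]; nlinarith
  rw [fderiv_coord_div_norm_sq_add_single hε]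
  calc _ ≤ 1 / (‖x‖ ^ 2 + ε) := by
        rw [abs_le]; constructor
        · linarith [show 2 / (‖x‖ ^ 2 + ε) = 1 / (‖x‖ ^ 2 + ε) + 1 / (‖x‖ ^ 2 + ε) by ring]
        · linarith [show 0 ≤ 2 * x i ^ 2 / (‖x‖ ^ 2 + ε) ^ 2 by positivity]
    _ ≤ 1 / ε := one_div_le_one_div_of_le hε (by nlinarith)

theorem card_sub_two_div_le_sum_fderiv_coord_div_norm_sq_add_single [DecidableEq ι] (hε : 0 < ε)
    (x : E) :
    ((Fintype.card ι : ℝ) - 2) / (‖x‖ ^ 2 + ε) ≤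
      ∑ i, fderiv ℝ (fun y : E => y i / (‖y‖ ^ 2 + ε)) x (EuclideanSpace.single i 1) := by
  have hr : 0 < ‖x‖ ^ 2 + ε := by positivity
  have h2 : 2 * ‖x‖ ^ 2 / (‖x‖ ^ 2 + ε) ^ 2 ≤ 2 / (‖x‖ ^ 2 + ε) := by
    rw [div_le_div_iff₀ (by positivity) hr]; nlinarith
  simp_rw [fderiv_coord_div_norm_sq_add_single hε]
  rw [Finset.sum_sub_distrib, Finset.sum_const, Finset.card_univ, nsmul_eq_mul, ← Finset.sum_div,
    ← Finset.mul_sum, ← EuclideanSpace.real_norm_sq_eq]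
  linarith [show ((Fintype.card ι : ℝ) - 2) / (‖x‖ ^ 2 + ε) =
    Fintype.card ι * (1 / (‖x‖ ^ 2 + ε)) - 2 / (‖x‖ ^ 2 + ε) by ring]

theorem sum_sq_coord_div_norm_sq_add_le (hε : 0 < ε) (x : E) :
    ∑ i, (x i / (‖x‖ ^ 2 + ε)) ^ 2 ≤ 1 / (‖x‖ ^ 2 + ε) := by
  have hr : 0 < ‖x‖ ^ 2 + ε := by positivity
  simp_rw [div_pow, ← Finset.sum_div, ← EuclideanSpace.real_norm_sq_eq]
  rw [div_le_div_iff₀ (by positivity) hr]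
  nlinarith

end RegularizedWeight

namespace SchwartzMap

variable {D F : Type*} [NormedAddCommGroup D] [NormedSpace ℝ D]
  [NormedAddCommGroup F] [InnerProductSpace ℝ F]

theorem fderiv_norm_sq_apply (f : 𝓢(D, F)) (x v : D) :
    fderiv ℝ (fun y => ‖f y‖ ^ 2) x v = 2 * ⟪f x, fderiv ℝ f x v⟫_ℝ := by
  rw [(f.hasFDerivAt x).norm_sq.fderiv]
  simp

variable [MeasurableSpace D] [BorelSpace D] [SecondCountableTopology D]
  {μ : Measure D} [μ.HasTemperateGrowth]

theorem integrable_inner (f g : 𝓢(D, F)) : Integrable (fun x => ⟪f x, g x⟫_ℝ) μ :=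
  (g.integrable.norm.const_mul (SchwartzMap.seminorm ℝ 0 0 f)).mono'
    (f.continuous.inner g.continuous).aestronglyMeasurable <| ae_of_all _ fun x =>
      (abs_real_inner_le_norm _ _).trans
        (mul_le_mul_of_nonneg_right (f.norm_le_seminorm ℝ x) (norm_nonneg _))

theorem integrable_norm_sq (f : 𝓢(D, F)) : Integrable (fun x => ‖f x‖ ^ 2) μ := by
  simpa only [real_inner_self_eq_norm_sq] using f.integrable_inner f

theorem integrable_fderiv_norm_sq_apply (f : 𝓢(D, F)) (v : D) :
    Integrable (fun x => fderiv ℝ (fun y => ‖f y‖ ^ 2) x v) μ := by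
  simp_rw [fderiv_norm_sq_apply]
  exact (f.integrable_inner (∂_{v} f)).const_mul 2

theorem integrable_norm_fderiv_apply_sq (f : 𝓢(D, F)) (v : D) :
    Integrable (fun x => ‖fderiv ℝ f x v‖ ^ 2) μ :=
  (∂_{v} f).integrable_norm_sq

end SchwartzMap

theorem mul_neg_two_mul_inner_mul_le {F : Type*} [NormedAddCommGroup F] [InnerProductSpace ℝ F]
    (t c : ℝ) (a b : F) : t * -(2 * ⟪a, b⟫_ℝ * c) ≤ t ^ 2 * (‖a‖ ^ 2 * c ^ 2) + ‖b‖ ^ 2 := by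
  have h := norm_add_sq_real ((t * c) • a) b
  rw [norm_smul, real_inner_smul_left, mul_pow, Real.norm_eq_abs, sq_abs] at h
  nlinarith [sq_nonneg ‖(t * c) • a + b‖]

section Hardy

variable {ι F : Type*} [Fintype ι] [NormedAddCommGroup F] [InnerProductSpace ℝ F] {ε : ℝ}

local notation "E" => EuclideanSpace ℝ ι

theorem mul_neg_sum_two_mul_inner_mul_coord_div_le (hε : 0 < ε) (t : ℝ) (a : F) (b : ι → F)
    (x : E) :
    t * -∑ i, 2 * ⟪a, b i⟫_ℝ * (x i / (‖x‖ ^ 2 + ε)) ≤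
      t ^ 2 * (‖a‖ ^ 2 / (‖x‖ ^ 2 + ε)) + ∑ i, ‖b i‖ ^ 2 := calc
  _ ≤ ∑ i, (t ^ 2 * (‖a‖ ^ 2 * (x i / (‖x‖ ^ 2 + ε)) ^ 2) + ‖b i‖ ^ 2) := by
    rw [← Finset.sum_neg_distrib, Finset.mul_sum]
    exact Finset.sum_le_sum fun i _ => mul_neg_two_mul_inner_mul_le t _ a _
  _ ≤ _ := by
    rw [Finset.sum_add_distrib, ← Finset.mul_sum, ← Finset.mul_sum, ← mul_one_div (‖a‖ ^ 2)]
    gcongr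
    exact sum_sq_coord_div_norm_sq_add_le hε x

theorem integrable_norm_sq_div_norm_sq_add (f : 𝓢(E, F)) (hε : 0 < ε) :
    Integrable (fun x : E => ‖f x‖ ^ 2 / (‖x‖ ^ 2 + ε)) := by
  simp_rw [div_eq_mul_inv]
  refine f.integrable_norm_sq.mul_bdd (c := ε⁻¹) (by fun_prop) (ae_of_all _ fun x => ?_)
  rw [norm_inv, Real.norm_of_nonneg (by positivity)]
  exact inv_anti₀ hε (by nlinarith [sq_nonneg ‖x‖])

theorem integral_norm_sq_mul_fderiv_coord_div_norm_sq_add [DecidableEq ι] (f : 𝓢(E, F))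
    (hε : 0 < ε) (i : ι) :
    ∫ x : E, ‖f x‖ ^ 2 *
        fderiv ℝ (fun y : E => y i / (‖y‖ ^ 2 + ε)) x (EuclideanSpace.single i 1) =
      -∫ x : E, 2 * ⟪f x, fderiv ℝ f x (EuclideanSpace.single i 1)⟫_ℝ * (x i / (‖x‖ ^ 2 + ε)) := by
  simpa only [SchwartzMap.fderiv_norm_sq_apply] using
    integral_mul_fderiv_eq_neg_fderiv_mul_of_bounded f.integrable_norm_sq
      (f.integrable_fderiv_norm_sq_apply _) (f.differentiable.norm_sq ℝ)
      (differentiable_coord_div_norm_sq_add hε i) (abs_coord_div_norm_sq_add_le hε · i)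
      (abs_fderiv_coord_div_norm_sq_add_single_le hε · i)

theorem integrable_inner_fderiv_mul_coord_div_norm_sq_add [DecidableEq ι] (f : 𝓢(E, F))
    (hε : 0 < ε) (i : ι) :
    Integrable (fun x : E =>
      2 * ⟪f x, fderiv ℝ f x (EuclideanSpace.single i 1)⟫_ℝ * (x i / (‖x‖ ^ 2 + ε))) :=
  ((f.integrable_inner (∂_{EuclideanSpace.single i (1 : ℝ)} f)).const_mul 2).mul_bdd
    (differentiable_coord_div_norm_sq_add hε i).continuous.aestronglyMeasurable
    (ae_of_all _ (abs_coord_div_norm_sq_add_le hε · i))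

theorem card_sub_two_mul_integral_le_neg_integral_inner_fderiv [DecidableEq ι] (f : 𝓢(E, F))
    (hε : 0 < ε) :
    ((Fintype.card ι : ℝ) - 2) * ∫ x : E, ‖f x‖ ^ 2 / (‖x‖ ^ 2 + ε) ≤
      -∫ x : E, ∑ i, 2 * ⟪f x, fderiv ℝ f x (EuclideanSpace.single i 1)⟫_ℝ *
        (x i / (‖x‖ ^ 2 + ε)) := by
  have hdiv_int : ∀ i, Integrable (fun x : E => ‖f x‖ ^ 2 *
      fderiv ℝ (fun y : E => y i / (‖y‖ ^ 2 + ε)) x (EuclideanSpace.single i 1)) := fun i =>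
    f.integrable_norm_sq.mul_bdd (measurable_fderiv_apply_const ℝ _ _).aestronglyMeasurable
      (ae_of_all _ (abs_fderiv_coord_div_norm_sq_add_single_le hε · i))
  calc _ = ∫ x : E, ((Fintype.card ι : ℝ) - 2) * (‖f x‖ ^ 2 / (‖x‖ ^ 2 + ε)) :=
        (integral_const_mul _ _).symm
    _ ≤ ∫ x : E, ∑ i, ‖f x‖ ^ 2 *
          fderiv ℝ (fun y : E => y i / (‖y‖ ^ 2 + ε)) x (EuclideanSpace.single i 1) := by
      refine integral_mono ((integrable_norm_sq_div_norm_sq_add f hε).const_mul _)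
        (integrable_finsetSum _ fun i _ => hdiv_int i) fun x => ?_
      rw [← Finset.mul_sum, mul_div_left_comm]
      exact mul_le_mul_of_nonneg_left
        (card_sub_two_div_le_sum_fderiv_coord_div_norm_sq_add_single hε x) (sq_nonneg _)
    _ = ∑ i, -∫ x : E, 2 * ⟪f x, fderiv ℝ f x (EuclideanSpace.single i 1)⟫_ℝ *
        (x i / (‖x‖ ^ 2 + ε)) := by
      rw [integral_finsetSum _ fun i _ => hdiv_int i]
      exact Finset.sum_congr rfl fun i _ => integral_norm_sq_mul_fderiv_coord_div_norm_sq_add f hε i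
    _ = _ := by
      rw [integral_finsetSum _ fun i _ => integrable_inner_fderiv_mul_coord_div_norm_sq_add f hε i,
        Finset.sum_neg_distrib]

theorem hardy_inequality_regularized [DecidableEq ι] (hι : 2 ≤ Fintype.card ι) (f : 𝓢(E, F))
    (hε : 0 < ε) :
    (((Fintype.card ι : ℝ) - 2) / 2) ^ 2 * ∫ x : E, ‖f x‖ ^ 2 / (‖x‖ ^ 2 + ε) ≤
      ∫ x : E, ∑ i, ‖fderiv ℝ f x (EuclideanSpace.single i 1)‖ ^ 2 := by
  set t : ℝ := ((Fintype.card ι : ℝ) - 2) / 2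
  have ht : 0 ≤ t := div_nonneg (sub_nonneg.2 (by exact_mod_cast hι)) zero_le_two
  have hA_int := integrable_norm_sq_div_norm_sq_add f hε
  have hflux_int := integrable_finsetSum Finset.univ fun i _ =>
    integrable_inner_fderiv_mul_coord_div_norm_sq_add f hε i
  have hgrad_int := integrable_finsetSum Finset.univ fun i _ =>
    f.integrable_norm_fderiv_apply_sq (μ := volume) (EuclideanSpace.single i 1)
  have h_div := card_sub_two_mul_integral_le_neg_integral_inner_fderiv f hε
  have h_amgm : t * -∫ x : E, ∑ i, 2 * ⟪f x, fderiv ℝ f x (EuclideanSpace.single i 1)⟫_ℝ *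
        (x i / (‖x‖ ^ 2 + ε)) ≤
      t ^ 2 * (∫ x : E, ‖f x‖ ^ 2 / (‖x‖ ^ 2 + ε)) +
        ∫ x : E, ∑ i, ‖fderiv ℝ f x (EuclideanSpace.single i 1)‖ ^ 2 := by
    rw [← integral_neg, ← integral_const_mul, ← integral_const_mul,
      ← integral_add (hA_int.const_mul _) hgrad_int]
    exact integral_mono (hflux_int.neg.const_mul t) ((hA_int.const_mul _).add hgrad_int)
      fun x => mul_neg_sum_two_mul_inner_mul_coord_div_le hε t (f x) _ x
  linear_combination (mul_le_mul_of_nonneg_left h_div ht) + h_amgm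

theorem hardy_inequality_euclideanSpace [DecidableEq ι] (hι : 3 ≤ Fintype.card ι) (f : 𝓢(E, F)) :
    ∫ x : E, ‖f x‖ ^ 2 / ‖x‖ ^ 2 ≤
      (2 / ((Fintype.card ι : ℝ) - 2)) ^ 2 *
        ∫ x : E, ∑ i, ‖fderiv ℝ f x (EuclideanSpace.single i 1)‖ ^ 2 := by
  have hm : 0 < (Fintype.card ι : ℝ) - 2 := by
    rw [sub_pos]; exact_mod_cast hι
  have : Nonempty ι := Fintype.card_pos_iff.1 (by omega)
  refine integral_le_of_tendsto_of_integral_le (l := 𝓝[>] 0)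
    (F := fun ε x => ‖f x‖ ^ 2 / (‖x‖ ^ 2 + ε))
    (fun ε => (by fun_prop : Measurable _).aestronglyMeasurable)
    (eventually_nhdsWithin_of_forall fun ε hε => integrable_norm_sq_div_norm_sq_add f hε)
    (eventually_nhdsWithin_of_forall fun ε (hε : 0 < ε) => ae_of_all _ fun x => by
      dsimp only; positivity)
    (ae_of_all _ fun x => by positivity) ?_
    (eventually_nhdsWithin_of_forall fun ε hε => ?_)
  · filter_upwards [Measure.ae_ne volume 0] with x hx
    have hx : ‖x‖ ^ 2 ≠ 0 := by simpa using hx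
    refine tendsto_const_nhds.div ?_ hx
    simpa using (tendsto_nhdsWithin_of_tendsto_nhds (tendsto_id (x := 𝓝 (0 : ℝ)))).const_add _
  · calc ∫ x : E, ‖f x‖ ^ 2 / (‖x‖ ^ 2 + ε)
        = (2 / ((Fintype.card ι : ℝ) - 2)) ^ 2 * ((((Fintype.card ι : ℝ) - 2) / 2) ^ 2 *
            ∫ x : E, ‖f x‖ ^ 2 / (‖x‖ ^ 2 + ε)) := by
          field_simp
      _ ≤ _ := by
          gcongr
          exact hardy_inequality_regularized (by omega) f hε

end Hardy

/-- Hardy's inequality on `ℝⁿ`, `n ≥ 3`: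
`∫ |f(x)|²/‖x‖² dx ≤ (2/(n−2))² ∫ ‖∇f(x)‖² dx` for Schwartz `f`. -/
theorem hardy_inequality {n : ℕ} (hn : 3 ≤ n)
    (f : SchwartzMap (EuclideanSpace ℝ (Fin n)) ℂ) :
    ∫ x : EuclideanSpace ℝ (Fin n), ‖f x‖ ^ 2 / ‖x‖ ^ 2 ≤
      (2 / ((n : ℝ) - 2)) ^ 2 *
        ∫ x : EuclideanSpace ℝ (Fin n), ∑ i, ‖pd f i x‖ ^ 2 := by
  have h := hardy_inequality_euclideanSpace (ι := Fin n) (by simpa using hn) f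
  rwa [Fintype.card_fin] at h

end
end

section
/- Let n ≥ 1, let V : ℝⁿ → ℝ and W : ℝ × ℝⁿ → ℝ be smooth with V, W and all their derivatives bounded, and let ψ : ℝ × ℝⁿ → ℂ be smooth such that for each t the functions ψ(t,·) and ∂ₜψ(t,·) are Schwartz, with Schwartz seminorms locally bounded in t, and ψ satisfies i∂ₜψ(t,x) = −Δψ(t,x) + V(x)ψ(t,x) + W(t,x)ψ(t,x) on ℝ × ℝⁿ. Then the energy E(t) := ∫_{ℝⁿ} ‖∇ₓψ(t,x)‖²_{ℂⁿ} dx + ∫_{ℝⁿ} (V(x) + W(t,x)) |ψ(t,x)|² dx is differentiable in t with E'(t) = ∫_{ℝⁿ} ∂ₜW(t,x) |ψ(t,x)|² dx. -/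
open MeasureTheory Complex

noncomputable section

/-- The Laplacian `Δf = ∑ i ∂²f/∂xᵢ²`. -/
def lap {n : ℕ} (f : EuclideanSpace ℝ (Fin n) → ℂ)
    (x : EuclideanSpace ℝ (Fin n)) : ℂ :=
  ∑ i, pd (fun y => pd f i y) i x

/-- Squared norm of the gradient, `‖∇f(x)‖²_{ℂⁿ} = ∑ i ‖∂ᵢf(x)‖²`. -/
def gradNormSq {n : ℕ} (f : EuclideanSpace ℝ (Fin n) → ℂ)
    (x : EuclideanSpace ℝ (Fin n)) : ℝ :=
  ∑ i, ‖pd f i x‖ ^ 2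

/-- `x·∇V(x) = ∑ i xᵢ ∂V/∂xᵢ(x)` for a real-valued potential `V`. -/
def xdotGrad {n : ℕ} (V : EuclideanSpace ℝ (Fin n) → ℝ)
    (x : EuclideanSpace ℝ (Fin n)) : ℝ :=
  ∑ i, x i * fderiv ℝ V x (EuclideanSpace.single i 1)

/-- Time derivative `∂ₜψ(t,x)`. -/
def tderiv {n : ℕ} (ψ : ℝ → EuclideanSpace ℝ (Fin n) → ℂ) (t : ℝ)
    (x : EuclideanSpace ℝ (Fin n)) : ℂ :=
  deriv (fun s => ψ s x) t

/-- `ψ(t,·)` is Schwartz for each `t`, with Schwartz seminorms locally bounded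
in `t`: on each compact time interval all weighted derivative bounds are uniform. -/
def LocUnifSchwartz {n : ℕ} (ψ : ℝ → EuclideanSpace ℝ (Fin n) → ℂ) : Prop :=
  ∀ (k m : ℕ) (T : ℝ), ∃ C : ℝ, ∀ t ∈ Set.Icc (-T) T,
    ∀ x : EuclideanSpace ℝ (Fin n),
      ‖x‖ ^ k * ‖iteratedFDeriv ℝ m (ψ t) x‖ ≤ C

/-- The conformal factor `‖(x−2pt)ψ(t)‖² = ∫_{ℝⁿ} ‖xψ(t,x) + 2it∇ₓψ(t,x)‖²_{ℂⁿ} dx`. -/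
def conformalFactor {n : ℕ} (ψ : ℝ → EuclideanSpace ℝ (Fin n) → ℂ) (t : ℝ) : ℝ :=
  ∫ x : EuclideanSpace ℝ (Fin n),
    ∑ i, ‖(x i : ℂ) * ψ t x + 2 * Complex.I * (t : ℂ) * pd (ψ t) i x‖ ^ 2


namespace EnergyAux

variable {G : Type*} [NormedAddCommGroup G] [NormedSpace ℝ G]
variable {F : Type*} [NormedAddCommGroup F] [NormedSpace ℝ F]

lemma hasDerivAt_slice {Ψ : ℝ × G → F} (hΨ : ContDiff ℝ (⊤ : ℕ∞) Ψ) (s : ℝ) (x : G) :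
    HasDerivAt (fun u => Ψ (u, x)) (fderiv ℝ Ψ (s, x) (1, 0)) s := by
  have h1 : HasFDerivAt Ψ (fderiv ℝ Ψ (s, x)) (s, x) :=
    (hΨ.differentiable (by simp) (s, x)).hasFDerivAt
  have h2 : HasDerivAt (fun u : ℝ => (u, x)) ((1 : ℝ), (0 : G)) s :=
    (hasDerivAt_id s).prodMk (hasDerivAt_const s x)
  exact h1.comp_hasDerivAt s h2

lemma hasFDerivAt_slice_right {Ψ : ℝ × G → F} (hΨ : ContDiff ℝ (⊤ : ℕ∞) Ψ) (s : ℝ) (x : G) :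
    HasFDerivAt (fun y => Ψ (s, y))
      ((fderiv ℝ Ψ (s, x)).comp (ContinuousLinearMap.inr ℝ ℝ G)) x :=
  ((hΨ.differentiable (by simp) (s, x)).hasFDerivAt).comp x (hasFDerivAt_prodMk_right s x)

lemma fderiv_slice_right {Ψ : ℝ × G → F} (hΨ : ContDiff ℝ (⊤ : ℕ∞) Ψ) (s : ℝ) (x : G) (v : G) :
    fderiv ℝ (fun y => Ψ (s, y)) x v = fderiv ℝ Ψ (s, x) (0, v) := by
  rw [(hasFDerivAt_slice_right hΨ s x).fderiv]; rfl

lemma hasDerivAt_mixed {Ψ : ℝ × G → F} (hΨ : ContDiff ℝ (⊤ : ℕ∞) Ψ) (s : ℝ) (x : G) (v : G) :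
    HasDerivAt (fun u => fderiv ℝ (fun y => Ψ (u, y)) x v)
      (fderiv ℝ (fun y => fderiv ℝ Ψ (s, y) (1, 0)) x v) s := by
  have hΦ : ContDiff ℝ (⊤ : ℕ∞) (fderiv ℝ Ψ) := hΨ.fderiv_right (by simp)
  have hsymm : ∀ p q, fderiv ℝ (fderiv ℝ Ψ) (s, x) p q
      = fderiv ℝ (fderiv ℝ Ψ) (s, x) q p :=
    second_derivative_symmetric (fun y => (hΨ.differentiable (by simp) y).hasFDerivAt)
      ((hΦ.differentiable (by simp) (s, x)).hasFDerivAt)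
  have h2 : HasDerivAt (fun u => fderiv ℝ Ψ (u, x))
      (fderiv ℝ (fderiv ℝ Ψ) (s, x) (1, 0)) s := hasDerivAt_slice hΦ s x
  have h3 : HasDerivAt (fun u => fderiv ℝ Ψ (u, x) ((0 : ℝ), v))
      (fderiv ℝ (fderiv ℝ Ψ) (s, x) (1, 0) (0, v)) s :=
    (ContinuousLinearMap.apply ℝ F ((0 : ℝ), v)).hasFDerivAt.comp_hasDerivAt s h2
  have h4 : HasFDerivAt (fun y => fderiv ℝ Ψ (s, y) ((1 : ℝ), (0 : G)))
      ((ContinuousLinearMap.apply ℝ F ((1 : ℝ), (0 : G))).comp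
        ((fderiv ℝ (fderiv ℝ Ψ) (s, x)).comp (ContinuousLinearMap.inr ℝ ℝ G))) x :=
    (ContinuousLinearMap.apply ℝ F ((1 : ℝ), (0 : G))).hasFDerivAt.comp x
      (hasFDerivAt_slice_right hΦ s x)
  have e1 : (fun u => fderiv ℝ (fun y => Ψ (u, y)) x v)
      = fun u => fderiv ℝ Ψ (u, x) ((0 : ℝ), v) := by
    funext u; exact fderiv_slice_right hΨ u x v
  have e2 : fderiv ℝ (fun y => fderiv ℝ Ψ (s, y) ((1 : ℝ), (0 : G))) x v
      = fderiv ℝ (fderiv ℝ Ψ) (s, x) (0, v) (1, 0) := by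
    rw [h4.fderiv]; rfl
  rw [e1, e2, ← hsymm]
  exact h3

lemma contDiff_fderiv_apply {f : G → F} (hf : ContDiff ℝ (⊤ : ℕ∞) f) (v : G) :
    ContDiff ℝ (⊤ : ℕ∞) (fun x => fderiv ℝ f x v) :=
  (ContinuousLinearMap.apply ℝ F v).contDiff.comp (hf.fderiv_right (by simp))

lemma norm_fderiv_apply_le {f : G → F} (x : G) {v : G} (hv : ‖v‖ = 1) :
    ‖fderiv ℝ f x v‖ ≤ ‖iteratedFDeriv ℝ 1 f x‖ := by
  have : fderiv ℝ f x v = iteratedFDeriv ℝ 1 f x ![v] := by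
    rw [iteratedFDeriv_one_apply]; rfl
  rw [this]
  refine ((iteratedFDeriv ℝ 1 f x).le_opNorm _).trans ?_
  simp [hv]

lemma norm_fderiv_fderiv_apply_le {f : G → F} (hf : ContDiff ℝ (⊤ : ℕ∞) f) (x : G) {v w : G}
    (hv : ‖v‖ = 1) (hw : ‖w‖ = 1) :
    ‖fderiv ℝ (fun y => fderiv ℝ f y v) x w‖ ≤ ‖iteratedFDeriv ℝ 2 f x‖ := by
  have hdf : DifferentiableAt ℝ (fderiv ℝ f) x :=
    ((hf.fderiv_right (m := (⊤ : ℕ∞)) (by simp)).differentiable (by simp)) x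
  have h1 : fderiv ℝ (fun y => fderiv ℝ f y v) x w
      = fderiv ℝ (fderiv ℝ f) x w v := by
    have := fderiv_clm_apply (c := fderiv ℝ f) (u := fun _ => v) hdf
      (differentiableAt_const v)
    rw [this]
    simp
  have h2 : fderiv ℝ (fderiv ℝ f) x w v = iteratedFDeriv ℝ 2 f x ![w, v] := by
    rw [iteratedFDeriv_two_apply]; simp
  rw [h1, h2]
  refine ((iteratedFDeriv ℝ 2 f x).le_opNorm _).trans ?_
  simp [Fin.prod_univ_two, hv, hw]


lemma pow_one_add_le (a : ℝ) (ha : 0 ≤ a) (p : ℕ) :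
    (1 + a) ^ p ≤ 2 ^ p * (1 + a ^ p) := by
  have h1 : 1 + a ≤ 2 * max 1 a := by
    rcases le_total a 1 with h | h
    · have : max 1 a = 1 := max_eq_left h
      rw [this]; linarith
    · have : max 1 a = a := max_eq_right h
      rw [this]; linarith
  have h2 : (1 + a) ^ p ≤ (2 * max 1 a) ^ p :=
    pow_le_pow_left₀ (by linarith) h1 p
  have h3 : (max 1 a) ^ p ≤ 1 + a ^ p := by
    rcases le_total a 1 with h | h
    · rw [max_eq_left h]; simp; positivity
    · rw [max_eq_right h]; nlinarith [pow_nonneg ha p]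
  calc (1 + a) ^ p ≤ (2 * max 1 a) ^ p := h2
    _ = 2 ^ p * (max 1 a) ^ p := mul_pow 2 _ p
    _ ≤ 2 ^ p * (1 + a ^ p) := by
        have : (0:ℝ) ≤ 2 ^ p := by positivity
        nlinarith [h3]

variable {n : ℕ}

lemma integrable_decay {f : EuclideanSpace ℝ (Fin n) → F} (hc : Continuous f) {C : ℝ}
    (hb : ∀ x, ‖f x‖ ≤ C * (1 + ‖x‖) ^ (-(n + 1 : ℝ))) :
    Integrable f (volume : Measure (EuclideanSpace ℝ (Fin n))) := by
  have h0 : ((Module.finrank ℝ (EuclideanSpace ℝ (Fin n)) : ℝ)) < (n + 1 : ℝ) := by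
    rw [finrank_euclideanSpace_fin]; norm_num
  have h1 : Integrable (fun x : EuclideanSpace ℝ (Fin n) => C * (1 + ‖x‖) ^ (-(n + 1 : ℝ)))
      (volume : Measure (EuclideanSpace ℝ (Fin n))) :=
    (integrable_one_add_norm h0).const_mul C
  exact h1.mono' hc.aestronglyMeasurable (ae_of_all _ fun x => hb x)

lemma le_decay_of_mul_pow_le {r : ℝ} {D : ℝ} {x : EuclideanSpace ℝ (Fin n)}
    (h : r * (1 + ‖x‖) ^ (n + 1 : ℕ) ≤ D) : r ≤ D * (1 + ‖x‖) ^ (-(n + 1 : ℝ)) := by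
  have hpos : (0:ℝ) < (1 + ‖x‖) ^ (n + 1 : ℕ) := by positivity
  have he : ((1:ℝ) + ‖x‖) ^ (-(n + 1 : ℝ)) = ((1 + ‖x‖) ^ (n + 1 : ℕ))⁻¹ := by
    rw [← Real.rpow_natCast (1 + ‖x‖) (n + 1), ← Real.rpow_neg (by positivity)]
    norm_num
  rw [he, ← div_eq_mul_inv, le_div_iff₀ hpos]
  exact h

lemma decay_bound {ψ : ℝ → EuclideanSpace ℝ (Fin n) → ℂ}
    (hS : ∀ (k m : ℕ) (T : ℝ), ∃ C : ℝ, ∀ t ∈ Set.Icc (-T) T,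
      ∀ x : EuclideanSpace ℝ (Fin n), ‖x‖ ^ k * ‖iteratedFDeriv ℝ m (ψ t) x‖ ≤ C)
    (m : ℕ) (T : ℝ) :
    ∃ C : ℝ, 0 ≤ C ∧ ∀ t ∈ Set.Icc (-T) T, ∀ x : EuclideanSpace ℝ (Fin n),
      ‖iteratedFDeriv ℝ m (ψ t) x‖ ≤ C * (1 + ‖x‖) ^ (-(n + 1 : ℝ)) := by
  obtain ⟨C0, hC0⟩ := hS 0 m T
  obtain ⟨C1, hC1⟩ := hS (n + 1) m T
  refine ⟨2 ^ (n + 1) * (max C0 0 + max C1 0), by positivity, fun t ht x => ?_⟩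
  apply le_decay_of_mul_pow_le
  have hb0 : ‖iteratedFDeriv ℝ m (ψ t) x‖ ≤ max C0 0 := by
    have := hC0 t ht x; simp only [pow_zero, one_mul] at this
    exact this.trans (le_max_left _ _)
  have hb1 : ‖x‖ ^ (n + 1) * ‖iteratedFDeriv ℝ m (ψ t) x‖ ≤ max C1 0 :=
    (hC1 t ht x).trans (le_max_left _ _)
  calc ‖iteratedFDeriv ℝ m (ψ t) x‖ * (1 + ‖x‖) ^ (n + 1 : ℕ)
      ≤ ‖iteratedFDeriv ℝ m (ψ t) x‖ * (2 ^ (n + 1) * (1 + ‖x‖ ^ (n + 1))) := by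
        exact mul_le_mul_of_nonneg_left (pow_one_add_le ‖x‖ (norm_nonneg x) (n + 1))
          (norm_nonneg _)
    _ = 2 ^ (n + 1) * (‖iteratedFDeriv ℝ m (ψ t) x‖
          + ‖x‖ ^ (n + 1) * ‖iteratedFDeriv ℝ m (ψ t) x‖) := by ring
    _ ≤ 2 ^ (n + 1) * (max C0 0 + max C1 0) := by
        have : (0:ℝ) ≤ (2:ℝ) ^ (n + 1) := by positivity
        nlinarith [hb0, hb1]

end EnergyAux

namespace EnergyAux

variable {n : ℕ}

lemma norm_single_one (i : Fin n) : ‖EuclideanSpace.single i (1:ℝ)‖ = 1 := by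
  rw [EuclideanSpace.norm_single]; norm_num

lemma norm_pd_le (f : EuclideanSpace ℝ (Fin n) → ℂ) (i : Fin n)
    (x : EuclideanSpace ℝ (Fin n)) : ‖pd f i x‖ ≤ ‖iteratedFDeriv ℝ 1 f x‖ :=
  norm_fderiv_apply_le x (norm_single_one i)

lemma norm_pd_pd_le {f : EuclideanSpace ℝ (Fin n) → ℂ} (hf : ContDiff ℝ (⊤ : ℕ∞) f) (i j : Fin n)
    (x : EuclideanSpace ℝ (Fin n)) :
    ‖pd (fun y => pd f i y) j x‖ ≤ ‖iteratedFDeriv ℝ 2 f x‖ :=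
  norm_fderiv_fderiv_apply_le hf x (norm_single_one i) (norm_single_one j)

lemma hasDerivAt_norm_sq_comp {g : ℝ → ℂ} {g' : ℂ} {s : ℝ} (h : HasDerivAt g g' s) :
    HasDerivAt (fun u => ‖g u‖ ^ 2) (2 * ((starRingEnd ℂ) (g s) * g').re) s := by
  have hre : HasDerivAt (fun u => (g u).re) g'.re s :=
    Complex.reCLM.hasFDerivAt.comp_hasDerivAt s h
  have him : HasDerivAt (fun u => (g u).im) g'.im s :=
    Complex.imCLM.hasFDerivAt.comp_hasDerivAt s h
  have H := (hre.mul hre).add (him.mul him)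
  have e1 : (fun u => ‖g u‖ ^ 2)
      = fun u => (g u).re * (g u).re + (g u).im * (g u).im := by
    funext u; rw [← Complex.normSq_apply, Complex.normSq_eq_norm_sq]
  have e2 : 2 * ((starRingEnd ℂ) (g s) * g').re
      = g'.re * (g s).re + (g s).re * g'.re + (g'.im * (g s).im + (g s).im * g'.im) := by
    simp only [Complex.mul_re, Complex.conj_re, Complex.conj_im]
    ring
  rw [e1, e2]
  exact H


lemma fderiv_conj_apply {G : Type*} [NormedAddCommGroup G] [NormedSpace ℝ G]
    {f : G → ℂ} {x : G} (hf : DifferentiableAt ℝ f x) (v : G) :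
    fderiv ℝ (fun y => (starRingEnd ℂ) (f y)) x v = (starRingEnd ℂ) (fderiv ℝ f x v) := by
  have h : fderiv ℝ (fun y => star (f y)) x =
      ((starL' ℝ : ℂ ≃L[ℝ] ℂ) : ℂ →L[ℝ] ℂ) ∘L fderiv ℝ f x := fderiv_star
  have e : (fun y => (starRingEnd ℂ) (f y)) = fun y => star (f y) := rfl
  rw [e, h]
  rfl

lemma differentiable_conj {G : Type*} [NormedAddCommGroup G] [NormedSpace ℝ G]
    {f : G → ℂ} (hf : Differentiable ℝ f) :
    Differentiable ℝ (fun y => (starRingEnd ℂ) (f y)) := by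
  have e : (fun y => (starRingEnd ℂ) (f y)) = fun y => star (f y) := rfl
  rw [e]
  exact hf.star

lemma integrable_const_mul_decay (c : ℝ) :
    Integrable (fun x : EuclideanSpace ℝ (Fin n) => c * (1 + ‖x‖) ^ (-(n + 1 : ℝ)))
      (volume : Measure (EuclideanSpace ℝ (Fin n))) := by
  have h0 : ((Module.finrank ℝ (EuclideanSpace ℝ (Fin n)) : ℝ)) < (n + 1 : ℝ) := by
    rw [finrank_euclideanSpace_fin]; norm_num
  exact (integrable_one_add_norm h0).const_mul c

lemma integrable_mul_decay {f g : EuclideanSpace ℝ (Fin n) → ℂ}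
    (hf : Continuous f) (hg : Continuous g) {Cf Cg : ℝ} (hCg : 0 ≤ Cg)
    (hbf : ∀ x, ‖f x‖ ≤ Cf * (1 + ‖x‖) ^ (-(n + 1 : ℝ))) (hbg : ∀ x, ‖g x‖ ≤ Cg) :
    Integrable (fun x => f x * g x) (volume : Measure (EuclideanSpace ℝ (Fin n))) := by
  refine integrable_decay (hf.mul hg) (C := Cf * Cg) fun x => ?_
  have h1 : (0:ℝ) ≤ Cf * (1 + ‖x‖) ^ (-(n + 1 : ℝ)) := le_trans (norm_nonneg _) (hbf x)
  calc ‖f x * g x‖ = ‖f x‖ * ‖g x‖ := norm_mul _ _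
    _ ≤ (Cf * (1 + ‖x‖) ^ (-(n + 1 : ℝ))) * Cg :=
        mul_le_mul (hbf x) (hbg x) (norm_nonneg _) h1
    _ = Cf * Cg * (1 + ‖x‖) ^ (-(n + 1 : ℝ)) := by ring

lemma integral_complex_re {X : Type*} [MeasurableSpace X] {μ : Measure X} {f : X → ℂ}
    (hf : Integrable f μ) : ∫ x, (f x).re ∂μ = (∫ x, f x ∂μ).re := by
  simpa using Complex.reCLM.integral_comp_comm hf

lemma pd_eq {n : ℕ} (f : EuclideanSpace ℝ (Fin n) → ℂ) (i : Fin n)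
    (x : EuclideanSpace ℝ (Fin n)) :
    pd f i x = fderiv ℝ f x (EuclideanSpace.single i 1) := rfl

lemma norm_one_zero {G : Type*} [NormedAddCommGroup G] [NormedSpace ℝ G] :
    ‖((1 : ℝ), (0 : G))‖ = 1 := by
  simp [Prod.norm_def]

end EnergyAux

set_option maxHeartbeats 1000000 in
/-- The energy identity `∂ₜ⟨ψ(t), (H+W)ψ(t)⟩ = ⟨ψ(t), (∂W/∂t)ψ(t)⟩` for
`H(t) = −Δ + V(x) + W(x,t)`:
`E(t) = ∫‖∇ₓψ‖² + ∫(V+W)|ψ|²` satisfies `E'(t) = ∫ ∂ₜW |ψ|²`. -/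
theorem energy_identity {n : ℕ} (hn : 1 ≤ n)
    (V : EuclideanSpace ℝ (Fin n) → ℝ) (hV : ContDiff ℝ (⊤ : ℕ∞) V)
    (hVbd : ∀ m : ℕ, ∃ C : ℝ, ∀ x, ‖iteratedFDeriv ℝ m V x‖ ≤ C)
    (W : ℝ → EuclideanSpace ℝ (Fin n) → ℝ)
    (hW : ContDiff ℝ (⊤ : ℕ∞) (fun p : ℝ × EuclideanSpace ℝ (Fin n) => W p.1 p.2))
    (hWbd : ∀ m : ℕ, ∃ C : ℝ, ∀ p : ℝ × EuclideanSpace ℝ (Fin n),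
      ‖iteratedFDeriv ℝ m (fun q : ℝ × EuclideanSpace ℝ (Fin n) => W q.1 q.2) p‖ ≤ C)
    (ψ : ℝ → EuclideanSpace ℝ (Fin n) → ℂ)
    (hψ : ContDiff ℝ (⊤ : ℕ∞) (fun p : ℝ × EuclideanSpace ℝ (Fin n) => ψ p.1 p.2))
    (hS : LocUnifSchwartz ψ)
    (hS' : LocUnifSchwartz (fun t => tderiv ψ t))
    (heq : ∀ t x, Complex.I * tderiv ψ t x
      = -lap (ψ t) x + (V x : ℂ) * ψ t x + (W t x : ℂ) * ψ t x) :
    ∀ t : ℝ,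
      HasDerivAt (fun s => (∫ x : EuclideanSpace ℝ (Fin n), gradNormSq (ψ s) x)
          + ∫ x : EuclideanSpace ℝ (Fin n), (V x + W s x) * ‖ψ s x‖ ^ 2)
        (∫ x : EuclideanSpace ℝ (Fin n),
          deriv (fun s => W s x) t * ‖ψ t x‖ ^ 2) t := by
  classical
  intro t
  set Ψ : ℝ × EuclideanSpace ℝ (Fin n) → ℂ := fun p => ψ p.1 p.2 with hΨdef
  set Wf : ℝ × EuclideanSpace ℝ (Fin n) → ℝ := fun p => W p.1 p.2 with hWfdef
  set P : EuclideanSpace ℝ (Fin n) → ℝ := fun x => (1 + ‖x‖) ^ (-(n + 1 : ℝ)) with hPdef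
  set T : ℝ := |t| + 1 with hTdef
  have hball : ∀ s ∈ Metric.ball t 1, s ∈ Set.Icc (-T) T := by
    intro s hs
    rw [Metric.mem_ball, Real.dist_eq] at hs
    have h1 := abs_lt.mp hs
    have h2 := le_abs_self t
    have h3 := neg_abs_le t
    constructor <;> simp only [hTdef] <;> linarith [h1.1, h1.2]
  have htmem : t ∈ Set.Icc (-T) T := hball t (Metric.mem_ball_self one_pos)
  have hP1 : ∀ x : EuclideanSpace ℝ (Fin n), P x ≤ 1 := fun x =>
    Real.rpow_le_one_of_one_le_of_nonpos (by linarith [norm_nonneg x])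
      (by rw [neg_nonpos]; positivity)
  have hPnn : ∀ x : EuclideanSpace ℝ (Fin n), 0 ≤ P x := fun x => Real.rpow_nonneg (by positivity) _
  -- smoothness of slices
  have hψs : ∀ s, ContDiff ℝ (⊤ : ℕ∞) (ψ s) := fun s =>
    hψ.comp (ContDiff.prodMk (contDiff_const (c := s)) contDiff_id)
  have htd : ∀ s x, tderiv ψ s x = fderiv ℝ Ψ (s, x) (1, 0) :=
    fun s x => (EnergyAux.hasDerivAt_slice hψ s x).deriv
  have htdfun : ∀ s, tderiv ψ s = fun x => fderiv ℝ Ψ (s, x) (1, 0) :=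
    fun s => funext (htd s)
  have hψ's : ∀ s, ContDiff ℝ (⊤ : ℕ∞) (tderiv ψ s) := by
    intro s; rw [htdfun s]
    exact (ContinuousLinearMap.apply ℝ ℂ ((1:ℝ), (0 : EuclideanSpace ℝ (Fin n)))).contDiff.comp
      ((hψ.fderiv_right (by simp)).comp (ContDiff.prodMk contDiff_const contDiff_id))
  have hψtderiv : ∀ s x, HasDerivAt (fun u => ψ u x) (tderiv ψ s x) s := by
    intro s x; rw [htd s x]; exact EnergyAux.hasDerivAt_slice hψ s x
  have hmix : ∀ (s : ℝ) (x : EuclideanSpace ℝ (Fin n)) (i : Fin n),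
      HasDerivAt (fun u => pd (ψ u) i x) (pd (tderiv ψ s) i x) s := by
    intro s x i
    have h := EnergyAux.hasDerivAt_mixed hψ s x (EuclideanSpace.single i 1)
    have e2 : pd (tderiv ψ s) i x
        = fderiv ℝ (fun y => fderiv ℝ Ψ (s, y) (1, 0)) x (EuclideanSpace.single i 1) := by
      unfold pd; rw [htdfun s]
    rw [e2]; exact h
  -- decay constants
  obtain ⟨A0, hA0n, hA0'⟩ := EnergyAux.decay_bound hS 0 T
  obtain ⟨A1, hA1n, hA1'⟩ := EnergyAux.decay_bound hS 1 T
  obtain ⟨A2, hA2n, hA2'⟩ := EnergyAux.decay_bound hS 2 T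
  obtain ⟨B0, hB0n, hB0'⟩ := EnergyAux.decay_bound hS' 0 T
  obtain ⟨B1, hB1n, hB1'⟩ := EnergyAux.decay_bound hS' 1 T
  have hψbd : ∀ s ∈ Set.Icc (-T) T, ∀ x : EuclideanSpace ℝ (Fin n), ‖ψ s x‖ ≤ A0 * P x := by
    intro s hs x
    have := hA0' s hs x
    rwa [norm_iteratedFDeriv_zero] at this
  have hpdbd : ∀ s ∈ Set.Icc (-T) T, ∀ (i : Fin n) (x : EuclideanSpace ℝ (Fin n)), ‖pd (ψ s) i x‖ ≤ A1 * P x :=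
    fun s hs i x => (EnergyAux.norm_pd_le _ i x).trans (hA1' s hs x)
  have hpd2bd : ∀ s ∈ Set.Icc (-T) T, ∀ (i : Fin n) (x : EuclideanSpace ℝ (Fin n)),
      ‖pd (fun y => pd (ψ s) i y) i x‖ ≤ A2 * P x :=
    fun s hs i x => (EnergyAux.norm_pd_pd_le (hψs s) i i x).trans (hA2' s hs x)
  have hψ'bd : ∀ s ∈ Set.Icc (-T) T, ∀ x : EuclideanSpace ℝ (Fin n), ‖tderiv ψ s x‖ ≤ B0 * P x := by
    intro s hs x
    have := hB0' s hs x
    rwa [norm_iteratedFDeriv_zero] at this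
  have hψ'bd1 : ∀ s ∈ Set.Icc (-T) T, ∀ x : EuclideanSpace ℝ (Fin n), ‖tderiv ψ s x‖ ≤ B0 := fun s hs x =>
    (hψ'bd s hs x).trans (by nlinarith [hP1 x, hPnn x])
  have hpd'bd : ∀ s ∈ Set.Icc (-T) T, ∀ (i : Fin n) (x : EuclideanSpace ℝ (Fin n)),
      ‖pd (tderiv ψ s) i x‖ ≤ B1 * P x :=
    fun s hs i x => (EnergyAux.norm_pd_le _ i x).trans (hB1' s hs x)
  have hpd'bd1 : ∀ s ∈ Set.Icc (-T) T, ∀ (i : Fin n) (x : EuclideanSpace ℝ (Fin n)),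
      ‖pd (tderiv ψ s) i x‖ ≤ B1 := fun s hs i x =>
    (hpd'bd s hs i x).trans (by nlinarith [hP1 x, hPnn x])
  obtain ⟨CV, hCV'⟩ := hVbd 0
  have hCV : ∀ x : EuclideanSpace ℝ (Fin n), |V x| ≤ CV := by
    intro x
    have := hCV' x
    rwa [norm_iteratedFDeriv_zero, Real.norm_eq_abs] at this
  have hCVn : 0 ≤ CV := le_trans (abs_nonneg _) (hCV 0)
  obtain ⟨CW0, hCW0'⟩ := hWbd 0
  have hCW0 : ∀ (s : ℝ) (x : EuclideanSpace ℝ (Fin n)), |W s x| ≤ CW0 := by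
    intro s x
    have := hCW0' (s, x)
    rwa [norm_iteratedFDeriv_zero, Real.norm_eq_abs] at this
  have hCW0n : 0 ≤ CW0 := le_trans (abs_nonneg _) (hCW0 0 0)
  obtain ⟨CW1, hCW1'⟩ := hWbd 1
  have hCW1 : ∀ (s : ℝ) (x : EuclideanSpace ℝ (Fin n)), |fderiv ℝ Wf (s, x) (1, 0)| ≤ CW1 := by
    intro s x
    have h := EnergyAux.norm_fderiv_apply_le (f := Wf) (s, x)
      (v := ((1:ℝ), (0 : EuclideanSpace ℝ (Fin n)))) EnergyAux.norm_one_zero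
    rw [Real.norm_eq_abs] at h
    exact h.trans (hCW1' (s, x))
  have hCW1n : 0 ≤ CW1 := le_trans (abs_nonneg _) (hCW1 0 0)
  -- continuity facts
  have hcψ : ∀ s, Continuous (ψ s) := fun s => (hψs s).continuous
  have hcψ' : ∀ s, Continuous (tderiv ψ s) := fun s => (hψ's s).continuous
  have hcpd : ∀ (s : ℝ) (i : Fin n), Continuous (fun x : EuclideanSpace ℝ (Fin n) => pd (ψ s) i x) := fun s i =>
    (EnergyAux.contDiff_fderiv_apply (hψs s) (EuclideanSpace.single i 1)).continuous
  have hcpd' : ∀ (s : ℝ) (i : Fin n), Continuous (fun x : EuclideanSpace ℝ (Fin n) => pd (tderiv ψ s) i x) :=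
    fun s i =>
    (EnergyAux.contDiff_fderiv_apply (hψ's s) (EuclideanSpace.single i 1)).continuous
  have hpdsm : ∀ (s : ℝ) (i : Fin n), ContDiff ℝ (⊤ : ℕ∞) (fun y : EuclideanSpace ℝ (Fin n) => pd (ψ s) i y) := fun s i =>
    EnergyAux.contDiff_fderiv_apply (hψs s) (EuclideanSpace.single i 1)
  have hcpd2 : ∀ (s : ℝ) (i : Fin n),
      Continuous (fun x : EuclideanSpace ℝ (Fin n) => pd (fun y => pd (ψ s) i y) i x) := fun s i =>
    (EnergyAux.contDiff_fderiv_apply (hpdsm s i) (EuclideanSpace.single i 1)).continuous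
  have hcW'aux : ∀ s : ℝ, ContDiff ℝ (⊤ : ℕ∞) (fun x : EuclideanSpace ℝ (Fin n) => fderiv ℝ Wf (s, x) (1, 0)) := fun s =>
    (ContinuousLinearMap.apply ℝ ℝ ((1:ℝ), (0 : EuclideanSpace ℝ (Fin n)))).contDiff.comp
      ((hW.fderiv_right (by simp)).comp (ContDiff.prodMk (contDiff_const (c := s)) contDiff_id))
  have hcW' : Continuous (fun x : EuclideanSpace ℝ (Fin n) => fderiv ℝ Wf (t, x) (1, 0)) :=
    (hcW'aux t).continuous
  -- term 1: dominated differentiation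
  set F1 : ℝ → EuclideanSpace ℝ (Fin n) → ℝ := fun s x => gradNormSq (ψ s) x with hF1def
  set F1' : ℝ → EuclideanSpace ℝ (Fin n) → ℝ := fun s x =>
    ∑ i, 2 * ((starRingEnd ℂ) (pd (ψ s) i x) * pd (tderiv ψ s) i x).re with hF1'def
  have key1 : Integrable (F1' t) (volume : Measure (EuclideanSpace ℝ (Fin n))) ∧
      HasDerivAt (fun s => ∫ x : EuclideanSpace ℝ (Fin n), F1 s x) (∫ x : EuclideanSpace ℝ (Fin n), F1' t x) t := by
    refine hasDerivAt_integral_of_dominated_loc_of_deriv_le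
      (bound := fun x : EuclideanSpace ℝ (Fin n) => (n : ℝ) * (2 * (A1 * B1)) * P x) (Metric.ball_mem_nhds t one_pos)
      (Filter.Eventually.of_forall fun s => ?_) ?_ ?_ ?_ ?_ ?_
    · exact (continuous_finset_sum _ fun i _ => ((hcpd s i).norm.pow 2)).aestronglyMeasurable
    · refine EnergyAux.integrable_decay
        (continuous_finset_sum _ fun i _ => ((hcpd t i).norm.pow 2))
        (C := (n : ℝ) * (A1 * A1)) fun x => ?_
      have hterm : ∀ i : Fin n, ‖pd (ψ t) i x‖ ^ 2 ≤ A1 * A1 * P x := by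
        intro i
        have h1 := hpdbd t htmem i x
        have h2 : ‖pd (ψ t) i x‖ ≤ A1 := h1.trans (by nlinarith [hP1 x, hPnn x])
        have := mul_le_mul h1 h2 (norm_nonneg _)
          (le_trans (norm_nonneg _) h1)
        calc ‖pd (ψ t) i x‖ ^ 2 = ‖pd (ψ t) i x‖ * ‖pd (ψ t) i x‖ := sq ‖pd (ψ t) i x‖
          _ ≤ A1 * P x * A1 := this
          _ = A1 * A1 * P x := by ring
      have hnn : 0 ≤ F1 t x := Finset.sum_nonneg fun i _ => sq_nonneg _
      rw [Real.norm_eq_abs, _root_.abs_of_nonneg hnn]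
      calc F1 t x ≤ ∑ _i : Fin n, A1 * A1 * P x := Finset.sum_le_sum fun i _ => hterm i
        _ = (n : ℝ) * (A1 * A1) * P x := by
            rw [Finset.sum_const, Finset.card_univ, Fintype.card_fin]; push_cast; ring
    · refine Continuous.aestronglyMeasurable ?_
      exact continuous_finset_sum _ fun i _ =>
        (continuous_const.mul (Complex.continuous_re.comp
          ((Complex.continuous_conj.comp (hcpd t i)).mul (hcpd' t i))))
    · refine ae_of_all _ fun x s hs => ?_
      have hsI := hball s hs
      have hterm : ∀ i : Fin n,
          |2 * ((starRingEnd ℂ) (pd (ψ s) i x) * pd (tderiv ψ s) i x).re|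
            ≤ 2 * (A1 * B1) * P x := by
        intro i
        have h1 : |((starRingEnd ℂ) (pd (ψ s) i x) * pd (tderiv ψ s) i x).re|
            ≤ ‖pd (ψ s) i x‖ * ‖pd (tderiv ψ s) i x‖ := by
          have h := Complex.abs_re_le_norm
            ((starRingEnd ℂ) (pd (ψ s) i x) * pd (tderiv ψ s) i x)
          rwa [norm_mul, starRingEnd_apply, norm_star] at h
        have h2 : ‖pd (ψ s) i x‖ * ‖pd (tderiv ψ s) i x‖ ≤ (A1 * P x) * B1 :=
          mul_le_mul (hpdbd s hsI i x) (hpd'bd1 s hsI i x) (norm_nonneg _)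
            (le_trans (norm_nonneg _) (hpdbd s hsI i x))
        rw [abs_mul, _root_.abs_two]
        calc 2 * |((starRingEnd ℂ) (pd (ψ s) i x) * pd (tderiv ψ s) i x).re|
            ≤ 2 * ((A1 * P x) * B1) := by nlinarith [h1, h2, abs_nonneg (((starRingEnd ℂ) (pd (ψ s) i x) * pd (tderiv ψ s) i x).re)]
          _ = 2 * (A1 * B1) * P x := by ring
      rw [Real.norm_eq_abs]
      calc |F1' s x| ≤ ∑ i : Fin n,
            |2 * ((starRingEnd ℂ) (pd (ψ s) i x) * pd (tderiv ψ s) i x).re| :=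
          Finset.abs_sum_le_sum_abs _ _
        _ ≤ ∑ _i : Fin n, 2 * (A1 * B1) * P x := Finset.sum_le_sum fun i _ => hterm i
        _ = (n : ℝ) * (2 * (A1 * B1)) * P x := by
            rw [Finset.sum_const, Finset.card_univ, Fintype.card_fin]; push_cast; ring
    · exact EnergyAux.integrable_const_mul_decay _
    · refine ae_of_all _ fun x s hs => ?_
      have : HasDerivAt (fun u => ∑ i, ‖pd (ψ u) i x‖ ^ 2) (F1' s x) s :=
        HasDerivAt.fun_sum fun i _ => EnergyAux.hasDerivAt_norm_sq_comp (hmix s x i)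
      exact this
  -- term 2: dominated differentiation
  set F2 : ℝ → EuclideanSpace ℝ (Fin n) → ℝ := fun s x => (V x + W s x) * ‖ψ s x‖ ^ 2 with hF2def
  set F2' : ℝ → EuclideanSpace ℝ (Fin n) → ℝ := fun s x =>
    fderiv ℝ Wf (s, x) (1, 0) * ‖ψ s x‖ ^ 2
      + (V x + W s x) * (2 * ((starRingEnd ℂ) (ψ s x) * tderiv ψ s x).re) with hF2'def
  have hcVW : ∀ s : ℝ, Continuous (fun x : EuclideanSpace ℝ (Fin n) => V x + W s x) := by
    intro s
    exact (hV.continuous).add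
      ((hW.continuous).comp (continuous_const.prodMk continuous_id))
  have hVWbd : ∀ (s : ℝ) (x : EuclideanSpace ℝ (Fin n)), |V x + W s x| ≤ CV + CW0 :=
    fun s x => (abs_add_le _ _).trans (add_le_add (hCV x) (hCW0 s x))
  have hψsq : ∀ s ∈ Set.Icc (-T) T, ∀ x : EuclideanSpace ℝ (Fin n),
      ‖ψ s x‖ ^ 2 ≤ A0 * A0 * P x := by
    intro s hs x
    have h1 := hψbd s hs x
    have h2 : ‖ψ s x‖ ≤ A0 := h1.trans (by nlinarith [hP1 x, hPnn x])
    calc ‖ψ s x‖ ^ 2 = ‖ψ s x‖ * ‖ψ s x‖ := sq ‖ψ s x‖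
      _ ≤ (A0 * P x) * A0 := mul_le_mul h1 h2 (norm_nonneg _)
          (le_trans (norm_nonneg _) h1)
      _ = A0 * A0 * P x := by ring
  have hrebd : ∀ s ∈ Set.Icc (-T) T, ∀ x : EuclideanSpace ℝ (Fin n),
      |((starRingEnd ℂ) (ψ s x) * tderiv ψ s x).re| ≤ (A0 * P x) * B0 := by
    intro s hs x
    have h := Complex.abs_re_le_norm ((starRingEnd ℂ) (ψ s x) * tderiv ψ s x)
    rw [norm_mul, starRingEnd_apply, norm_star] at h
    refine h.trans ?_
    exact mul_le_mul (hψbd s hs x) (hψ'bd1 s hs x) (norm_nonneg _)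
      (le_trans (norm_nonneg _) (hψbd s hs x))
  have key2 : Integrable (F2' t) (volume : Measure (EuclideanSpace ℝ (Fin n))) ∧
      HasDerivAt (fun s => ∫ x : EuclideanSpace ℝ (Fin n), F2 s x) (∫ x : EuclideanSpace ℝ (Fin n), F2' t x) t := by
    refine hasDerivAt_integral_of_dominated_loc_of_deriv_le
      (bound := fun x : EuclideanSpace ℝ (Fin n) =>
        (CW1 * (A0 * A0) + (CV + CW0) * (2 * (A0 * B0))) * P x) (Metric.ball_mem_nhds t one_pos)
      (Filter.Eventually.of_forall fun s => ?_) ?_ ?_ ?_ ?_ ?_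
    · exact ((hcVW s).mul ((hcψ s).norm.pow 2)).aestronglyMeasurable
    · refine EnergyAux.integrable_decay ((hcVW t).mul ((hcψ t).norm.pow 2))
        (C := (CV + CW0) * (A0 * A0)) fun x => ?_
      rw [Real.norm_eq_abs, abs_mul, _root_.abs_of_nonneg (sq_nonneg ‖ψ t x‖)]
      calc |V x + W t x| * ‖ψ t x‖ ^ 2 ≤ (CV + CW0) * (A0 * A0 * P x) :=
          mul_le_mul (hVWbd t x) (hψsq t htmem x) (sq_nonneg _) (by positivity)
        _ = (CV + CW0) * (A0 * A0) * P x := by ring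
    · refine Continuous.aestronglyMeasurable ?_
      exact (hcW'.mul ((hcψ t).norm.pow 2)).add ((hcVW t).mul (continuous_const.mul
        (Complex.continuous_re.comp
          ((Complex.continuous_conj.comp (hcψ t)).mul (hcψ' t)))))
    · refine ae_of_all _ fun x s hs => ?_
      have hsI := hball s hs
      have t1 : |fderiv ℝ Wf (s, x) (1, 0) * ‖ψ s x‖ ^ 2| ≤ CW1 * (A0 * A0 * P x) := by
        rw [abs_mul, _root_.abs_of_nonneg (sq_nonneg ‖ψ s x‖)]
        exact mul_le_mul (hCW1 s x) (hψsq s hsI x) (sq_nonneg _) hCW1n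
      have t2 : |(V x + W s x) * (2 * ((starRingEnd ℂ) (ψ s x) * tderiv ψ s x).re)|
          ≤ (CV + CW0) * (2 * ((A0 * P x) * B0)) := by
        rw [abs_mul, abs_mul, _root_.abs_two]
        refine mul_le_mul (hVWbd s x) ?_ (by positivity) (by positivity)
        have := hrebd s hsI x
        nlinarith [this, abs_nonneg (((starRingEnd ℂ) (ψ s x) * tderiv ψ s x).re)]
      rw [Real.norm_eq_abs]
      calc |F2' s x| ≤ |fderiv ℝ Wf (s, x) (1, 0) * ‖ψ s x‖ ^ 2|
            + |(V x + W s x) * (2 * ((starRingEnd ℂ) (ψ s x) * tderiv ψ s x).re)| :=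
          abs_add_le _ _
        _ ≤ CW1 * (A0 * A0 * P x) + (CV + CW0) * (2 * ((A0 * P x) * B0)) :=
          add_le_add t1 t2
        _ = (CW1 * (A0 * A0) + (CV + CW0) * (2 * (A0 * B0))) * P x := by ring
    · exact EnergyAux.integrable_const_mul_decay _
    · refine ae_of_all _ fun x s hs => ?_
      have hW1 : HasDerivAt (fun u => W u x) (fderiv ℝ Wf (s, x) (1, 0)) s :=
        EnergyAux.hasDerivAt_slice hW s x
      have hsum : HasDerivAt (fun u => V x + W u x) (fderiv ℝ Wf (s, x) (1, 0)) s :=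
        hW1.const_add (V x)
      have hns : HasDerivAt (fun u => ‖ψ u x‖ ^ 2)
          (2 * ((starRingEnd ℂ) (ψ s x) * tderiv ψ s x).re) s :=
        EnergyAux.hasDerivAt_norm_sq_comp (hψtderiv s x)
      exact hsum.mul hns
  -- integrable pieces at time t
  have Ia : ∀ i : Fin n, Integrable
      (fun x : EuclideanSpace ℝ (Fin n) =>
        (starRingEnd ℂ) (pd (ψ t) i x) * pd (tderiv ψ t) i x)
      (volume : Measure (EuclideanSpace ℝ (Fin n))) := by
    intro i
    refine EnergyAux.integrable_mul_decay (Complex.continuous_conj.comp (hcpd t i))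
      (hcpd' t i) hB1n (Cf := A1) (fun x => ?_) (fun x => hpd'bd1 t htmem i x)
    simp only [starRingEnd_apply, norm_star]
    exact hpdbd t htmem i x
  have Ib : ∀ i : Fin n, Integrable
      (fun x : EuclideanSpace ℝ (Fin n) =>
        (starRingEnd ℂ) (pd (fun y => pd (ψ t) i y) i x) * tderiv ψ t x)
      (volume : Measure (EuclideanSpace ℝ (Fin n))) := by
    intro i
    refine EnergyAux.integrable_mul_decay (Complex.continuous_conj.comp (hcpd2 t i))
      (hcψ' t) hB0n (Cf := A2) (fun x => ?_) (fun x => hψ'bd1 t htmem x)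
    simp only [starRingEnd_apply, norm_star]
    exact hpd2bd t htmem i x
  have Ic : ∀ i : Fin n, Integrable
      (fun x : EuclideanSpace ℝ (Fin n) => (starRingEnd ℂ) (pd (ψ t) i x) * tderiv ψ t x)
      (volume : Measure (EuclideanSpace ℝ (Fin n))) := by
    intro i
    refine EnergyAux.integrable_mul_decay (Complex.continuous_conj.comp (hcpd t i))
      (hcψ' t) hB0n (Cf := A1) (fun x => ?_) (fun x => hψ'bd1 t htmem x)
    simp only [starRingEnd_apply, norm_star]
    exact hpdbd t htmem i x
  have If' : Integrable
      (fun x : EuclideanSpace ℝ (Fin n) =>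
        ((V x + W t x : ℝ) : ℂ) * ((starRingEnd ℂ) (ψ t x) * tderiv ψ t x))
      (volume : Measure (EuclideanSpace ℝ (Fin n))) := by
    have hc : Continuous (fun x : EuclideanSpace ℝ (Fin n) =>
        ((V x + W t x : ℝ) : ℂ) * (starRingEnd ℂ) (ψ t x)) :=
      (Complex.continuous_ofReal.comp (hcVW t)).mul
        (Complex.continuous_conj.comp (hcψ t))
    have h := EnergyAux.integrable_mul_decay hc (hcψ' t) hB0n
      (Cf := (CV + CW0) * A0) (fun x => ?_) (fun x => hψ'bd1 t htmem x)
    · refine h.congr (ae_of_all _ fun x => ?_)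
      ring
    · rw [norm_mul, Complex.norm_real, starRingEnd_apply, norm_star]
      calc |V x + W t x| * ‖ψ t x‖ ≤ (CV + CW0) * (A0 * P x) :=
          mul_le_mul (hVWbd t x) (hψbd t htmem x) (norm_nonneg _) (by positivity)
        _ = (CV + CW0) * A0 * P x := by ring
  have Id : Integrable
      (fun x : EuclideanSpace ℝ (Fin n) => fderiv ℝ Wf (t, x) (1, 0) * ‖ψ t x‖ ^ 2)
      (volume : Measure (EuclideanSpace ℝ (Fin n))) := by
    refine EnergyAux.integrable_decay (hcW'.mul ((hcψ t).norm.pow 2))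
      (C := CW1 * (A0 * A0)) fun x => ?_
    rw [Real.norm_eq_abs, abs_mul, _root_.abs_of_nonneg (sq_nonneg ‖ψ t x‖)]
    calc |fderiv ℝ Wf (t, x) (1, 0)| * ‖ψ t x‖ ^ 2 ≤ CW1 * (A0 * A0 * P x) :=
        mul_le_mul (hCW1 t x) (hψsq t htmem x) (sq_nonneg _) hCW1n
      _ = CW1 * (A0 * A0) * P x := by ring
  have Ie : Integrable
      (fun x : EuclideanSpace ℝ (Fin n) =>
        (V x + W t x) * (2 * ((starRingEnd ℂ) (ψ t x) * tderiv ψ t x).re))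
      (volume : Measure (EuclideanSpace ℝ (Fin n))) := by
    refine EnergyAux.integrable_decay ((hcVW t).mul (continuous_const.mul
        (Complex.continuous_re.comp
          ((Complex.continuous_conj.comp (hcψ t)).mul (hcψ' t)))))
      (C := (CV + CW0) * (2 * (A0 * B0))) fun x => ?_
    rw [Real.norm_eq_abs, abs_mul, abs_mul, _root_.abs_two]
    calc |V x + W t x| * (2 * |((starRingEnd ℂ) (ψ t x) * tderiv ψ t x).re|)
        ≤ (CV + CW0) * (2 * ((A0 * P x) * B0)) := by
          refine mul_le_mul (hVWbd t x) ?_ (by positivity) (by positivity)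
          have := hrebd t htmem x
          nlinarith [this, abs_nonneg (((starRingEnd ℂ) (ψ t x) * tderiv ψ t x).re)]
      _ = (CV + CW0) * (2 * (A0 * B0)) * P x := by ring
  -- integration by parts in each coordinate
  have hconjd : ∀ (i : Fin n) (x : EuclideanSpace ℝ (Fin n)),
      fderiv ℝ (fun y => (starRingEnd ℂ) (pd (ψ t) i y)) x (EuclideanSpace.single i 1)
        = (starRingEnd ℂ) (pd (fun y => pd (ψ t) i y) i x) := fun i x =>
    EnergyAux.fderiv_conj_apply ((hpdsm t i).differentiable (by simp) x) _
  have E2 : ∀ i : Fin n,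
      (∫ x : EuclideanSpace ℝ (Fin n),
          (starRingEnd ℂ) (pd (ψ t) i x) * pd (tderiv ψ t) i x)
        = -∫ x : EuclideanSpace ℝ (Fin n),
            (starRingEnd ℂ) (pd (fun y => pd (ψ t) i y) i x) * tderiv ψ t x := by
    intro i
    have hf'g : Integrable (fun x : EuclideanSpace ℝ (Fin n) =>
        fderiv ℝ (fun y => (starRingEnd ℂ) (pd (ψ t) i y)) x (EuclideanSpace.single i 1)
          * tderiv ψ t x) volume :=
      (Ib i).congr (ae_of_all _ fun x => by simp only [hconjd i x])
    have hdf : Differentiable ℝ (fun y => (starRingEnd ℂ) (pd (ψ t) i y)) :=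
      EnergyAux.differentiable_conj ((hpdsm t i).differentiable (by simp))
    have hdg : Differentiable ℝ (tderiv ψ t) := (hψ's t).differentiable (by simp)
    have h := integral_mul_fderiv_eq_neg_fderiv_mul_of_integrable
      (μ := (volume : Measure (EuclideanSpace ℝ (Fin n))))
      (f := fun x => (starRingEnd ℂ) (pd (ψ t) i x)) (g := tderiv ψ t)
      (v := EuclideanSpace.single i 1) hf'g (Ia i) (Ic i) (fun x _ => hdf x) (fun x _ => hdg x)
    have h2 : (∫ x : EuclideanSpace ℝ (Fin n),
        fderiv ℝ (fun y => (starRingEnd ℂ) (pd (ψ t) i y)) x (EuclideanSpace.single i 1)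
          * tderiv ψ t x)
        = ∫ x : EuclideanSpace ℝ (Fin n),
            (starRingEnd ℂ) (pd (fun y => pd (ψ t) i y) i x) * tderiv ψ t x := by
      refine integral_congr_ae (ae_of_all _ fun x => ?_)
      simp only [hconjd i x]
    have h3 : (∫ x : EuclideanSpace ℝ (Fin n),
        (starRingEnd ℂ) (pd (ψ t) i x) * pd (tderiv ψ t) i x)
        = ∫ x : EuclideanSpace ℝ (Fin n), (starRingEnd ℂ) (pd (ψ t) i x)
            * fderiv ℝ (tderiv ψ t) x (EuclideanSpace.single i 1) := rfl
    rw [h3, h, h2]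
  -- term 1 value
  have E1 : (∫ x : EuclideanSpace ℝ (Fin n), F1' t x)
      = 2 * (∑ i : Fin n, ∫ x : EuclideanSpace ℝ (Fin n),
          (starRingEnd ℂ) (pd (ψ t) i x) * pd (tderiv ψ t) i x).re := by
    have hsum := integral_finset_sum (μ := (volume : Measure (EuclideanSpace ℝ (Fin n))))
      Finset.univ (f := fun (i : Fin n) (x : EuclideanSpace ℝ (Fin n)) =>
        2 * ((starRingEnd ℂ) (pd (ψ t) i x) * pd (tderiv ψ t) i x).re)
      (fun i _ => ((Complex.reCLM : ℂ →L[ℝ] ℝ).integrable_comp (Ia i)).const_mul 2)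
    refine hsum.trans ?_
    rw [Complex.re_sum, Finset.mul_sum]
    refine Finset.sum_congr rfl fun i _ => ?_
    rw [integral_const_mul, EnergyAux.integral_complex_re (Ia i)]
  -- term 2 value
  have hpt : ∀ x : EuclideanSpace ℝ (Fin n),
      (V x + W t x) * (2 * ((starRingEnd ℂ) (ψ t x) * tderiv ψ t x).re)
        = 2 * (((V x + W t x : ℝ) : ℂ)
            * ((starRingEnd ℂ) (ψ t x) * tderiv ψ t x)).re := by
    intro x
    simp only [Complex.mul_re, Complex.ofReal_re, Complex.ofReal_im]
    ring
  have E4 : (∫ x : EuclideanSpace ℝ (Fin n), F2' t x)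
      = (∫ x : EuclideanSpace ℝ (Fin n), fderiv ℝ Wf (t, x) (1, 0) * ‖ψ t x‖ ^ 2)
        + 2 * (∫ x : EuclideanSpace ℝ (Fin n),
            ((V x + W t x : ℝ) : ℂ)
              * ((starRingEnd ℂ) (ψ t x) * tderiv ψ t x)).re := by
    have := integral_add (μ := (volume : Measure (EuclideanSpace ℝ (Fin n)))) Id Ie
    refine this.trans ?_
    congr 1
    have h2 : (∫ x : EuclideanSpace ℝ (Fin n),
        (V x + W t x) * (2 * ((starRingEnd ℂ) (ψ t x) * tderiv ψ t x).re))
        = ∫ x : EuclideanSpace ℝ (Fin n), 2 * (((V x + W t x : ℝ) : ℂ)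
            * ((starRingEnd ℂ) (ψ t x) * tderiv ψ t x)).re := by
      refine integral_congr_ae (ae_of_all _ fun x => ?_)
      exact hpt x
    rw [h2, integral_const_mul, EnergyAux.integral_complex_re If']
  -- cancellation of the complex parts
  have E5 : ((∑ i : Fin n, ∫ x : EuclideanSpace ℝ (Fin n),
        (starRingEnd ℂ) (pd (ψ t) i x) * pd (tderiv ψ t) i x)
      + ∫ x : EuclideanSpace ℝ (Fin n),
          ((V x + W t x : ℝ) : ℂ) * ((starRingEnd ℂ) (ψ t x) * tderiv ψ t x)).re = 0 := by
    have hXc : (∑ i : Fin n, ∫ x : EuclideanSpace ℝ (Fin n),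
        (starRingEnd ℂ) (pd (ψ t) i x) * pd (tderiv ψ t) i x)
        = -∫ x : EuclideanSpace ℝ (Fin n), (∑ i : Fin n,
            (starRingEnd ℂ) (pd (fun y => pd (ψ t) i y) i x) * tderiv ψ t x) := by
      rw [Finset.sum_congr rfl fun i _ => E2 i, Finset.sum_neg_distrib,
        ← integral_finset_sum Finset.univ fun i _ => Ib i]
    have hIbsum : Integrable (fun x : EuclideanSpace ℝ (Fin n) => ∑ i : Fin n,
        (starRingEnd ℂ) (pd (fun y => pd (ψ t) i y) i x) * tderiv ψ t x) volume :=
      integrable_finset_sum Finset.univ fun i _ => Ib i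
    have hsub : (-∫ x : EuclideanSpace ℝ (Fin n), (∑ i : Fin n,
          (starRingEnd ℂ) (pd (fun y => pd (ψ t) i y) i x) * tderiv ψ t x))
        + (∫ x : EuclideanSpace ℝ (Fin n),
            ((V x + W t x : ℝ) : ℂ) * ((starRingEnd ℂ) (ψ t x) * tderiv ψ t x))
        = ∫ x : EuclideanSpace ℝ (Fin n),
            (((V x + W t x : ℝ) : ℂ) * ((starRingEnd ℂ) (ψ t x) * tderiv ψ t x)
              - ∑ i : Fin n,
                (starRingEnd ℂ) (pd (fun y => pd (ψ t) i y) i x) * tderiv ψ t x) := by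
      rw [integral_sub If' hIbsum]; ring
    have hpoint : ∀ x : EuclideanSpace ℝ (Fin n),
        ((V x + W t x : ℝ) : ℂ) * ((starRingEnd ℂ) (ψ t x) * tderiv ψ t x)
          - (∑ i : Fin n,
              (starRingEnd ℂ) (pd (fun y => pd (ψ t) i y) i x) * tderiv ψ t x)
          = -Complex.I * ((‖tderiv ψ t x‖ ^ 2 : ℝ) : ℂ) := by
      intro x
      have hlap : ((V x + W t x : ℝ) : ℂ) * ((starRingEnd ℂ) (ψ t x) * tderiv ψ t x)
          - (∑ i : Fin n,
              (starRingEnd ℂ) (pd (fun y => pd (ψ t) i y) i x) * tderiv ψ t x)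
          = (starRingEnd ℂ) (-lap (ψ t) x + (V x : ℂ) * ψ t x + (W t x : ℂ) * ψ t x)
              * tderiv ψ t x := by
        rw [← Finset.sum_mul]
        simp only [lap, map_add, map_neg, map_sum, map_mul, Complex.conj_ofReal,
          Complex.ofReal_add]
        ring
      rw [hlap, ← heq t x, map_mul, Complex.conj_I]
      have hns : (starRingEnd ℂ) (tderiv ψ t x) * tderiv ψ t x
          = ((‖tderiv ψ t x‖ ^ 2 : ℝ) : ℂ) := by
        rw [mul_comm, Complex.mul_conj, Complex.normSq_eq_norm_sq]
      rw [mul_assoc, hns]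
    have Ih : Integrable (fun x : EuclideanSpace ℝ (Fin n) =>
        ((‖tderiv ψ t x‖ ^ 2 : ℝ) : ℂ)) (volume : Measure (EuclideanSpace ℝ (Fin n))) := by
      have hmul := EnergyAux.integrable_mul_decay
        (Complex.continuous_conj.comp (hcψ' t)) (hcψ' t) hB0n (Cf := B0)
        (fun x => by
          show ‖(starRingEnd ℂ) (tderiv ψ t x)‖ ≤ B0 * P x
          rw [starRingEnd_apply, norm_star]; exact hψ'bd t htmem x)
        (fun x => hψ'bd1 t htmem x)
      refine hmul.congr (ae_of_all _ fun x => ?_)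
      show (starRingEnd ℂ) (tderiv ψ t x) * tderiv ψ t x = ((‖tderiv ψ t x‖ ^ 2 : ℝ) : ℂ)
      rw [mul_comm, Complex.mul_conj, Complex.normSq_eq_norm_sq]
    have hzim : (∫ x : EuclideanSpace ℝ (Fin n),
        ((‖tderiv ψ t x‖ ^ 2 : ℝ) : ℂ)).im = 0 := by
      have him := Complex.imCLM.integral_comp_comm Ih
      simp only [Complex.imCLM_apply, Complex.ofReal_im, integral_zero] at him
      exact him.symm
    rw [hXc, hsub, integral_congr_ae (ae_of_all _ hpoint), integral_const_mul,
      Complex.mul_re, Complex.neg_re, Complex.neg_im, Complex.I_re, Complex.I_im, hzim]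
    ring
  -- putting everything together
  have hW't : ∀ x : EuclideanSpace ℝ (Fin n),
      deriv (fun s => W s x) t = fderiv ℝ Wf (t, x) (1, 0) := fun x =>
    (EnergyAux.hasDerivAt_slice hW t x).deriv
  have hval : (∫ x : EuclideanSpace ℝ (Fin n), F1' t x)
      + (∫ x : EuclideanSpace ℝ (Fin n), F2' t x)
      = ∫ x : EuclideanSpace ℝ (Fin n), deriv (fun s => W s x) t * ‖ψ t x‖ ^ 2 := by
    rw [E1, E4]
    have hre := E5
    rw [Complex.add_re] at hre
    have hlast : (∫ x : EuclideanSpace ℝ (Fin n), fderiv ℝ Wf (t, x) (1, 0) * ‖ψ t x‖ ^ 2)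
        = ∫ x : EuclideanSpace ℝ (Fin n), deriv (fun s => W s x) t * ‖ψ t x‖ ^ 2 := by
      refine integral_congr_ae (ae_of_all _ fun x => ?_)
      simp only [hW't]
    rw [← hlast]
    linarith [hre]
  have hfinal := key1.2.add key2.2
  rw [hval] at hfinal
  exact hfinal

end
end

section
/- Let n ≥ 1, let V : ℝⁿ → ℝ and W : ℝ × ℝⁿ → ℝ be smooth with V, W and all their derivatives bounded, and let ψ : ℝ × ℝⁿ → ℂ be smooth such that for each t the functions ψ(t,·) and ∂ₜψ(t,·) are Schwartz, with Schwartz seminorms locally bounded in t, and ψ satisfies i∂ₜψ(t,x) = −Δψ(t,x) + V(x)ψ(t,x) + W(t,x)ψ(t,x) on ℝ × ℝⁿ. Then the function m(t) := ∫_{ℝⁿ} W(t,x)|ψ(t,x)|² dx is differentiable with m'(t) = ∫_{ℝⁿ} ∂ₜW(t,x)|ψ(t,x)|² dx + 2 Im ∫_{ℝⁿ} conj(ψ(t,x)) (∇ₓW(t,x) · ∇ₓψ(t,x)) dx, where ∇ₓW(t,x)·∇ₓψ(t,x) = ∑ⱼ ∂W/∂xⱼ(t,x) ∂ψ/∂xⱼ(t,x).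 -/
open MeasureTheory Complex

noncomputable section

section Helpers
open Module
variable {n : ℕ}

lemma integrable_of_decay {F : Type*} [NormedAddCommGroup F]
    {f : EuclideanSpace ℝ (Fin n) → F}
    (hf : AEStronglyMeasurable f volume) {C : ℝ}
    (hC : ∀ x, ‖f x‖ * (1 + ‖x‖) ^ (n + 1) ≤ C) : Integrable f := by
  have hnr : (finrank ℝ (EuclideanSpace ℝ (Fin n)) : ℝ) < (n + 1 : ℝ) := by
    simp [finrank_euclideanSpace_fin]
  refine ((integrable_one_add_norm (μ := volume) hnr).const_mul C).mono' hf ?_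
  filter_upwards with x
  have h1 : (0:ℝ) < 1 + ‖x‖ := by positivity
  have h2 : (1 + ‖x‖ : ℝ) ^ (-(n + 1 : ℝ)) = ((1 + ‖x‖) ^ (n + 1))⁻¹ := by
    rw [Real.rpow_neg h1.le, ← Real.rpow_natCast (1 + ‖x‖) (n+1)]
    norm_num
  rw [h2]
  calc ‖f x‖ = ‖f x‖ * (1 + ‖x‖) ^ (n+1) * ((1+‖x‖)^(n+1))⁻¹ := by
        field_simp
    _ ≤ C * ((1+‖x‖)^(n+1))⁻¹ := by
        apply mul_le_mul_of_nonneg_right (hC x) (by positivity)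

lemma locunif_decay {ψ : ℝ → EuclideanSpace ℝ (Fin n) → ℂ} (hS : LocUnifSchwartz ψ)
    (m : ℕ) (t : ℝ) :
    ∃ C : ℝ, 0 ≤ C ∧ ∀ s ∈ Set.Icc (t-1) (t+1), ∀ x : EuclideanSpace ℝ (Fin n),
      ‖iteratedFDeriv ℝ m (ψ s) x‖ * (1+‖x‖)^(n+1) ≤ C := by
  choose Cf hCf using fun k => hS k m (|t|+1)
  refine ⟨∑ k ∈ Finset.range (n+2), ((n+1).choose k : ℝ) * max (Cf k) 0, ?_, ?_⟩
  · exact Finset.sum_nonneg fun k _ => by positivity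
  · intro s hs x
    have hsI : s ∈ Set.Icc (-(|t|+1)) (|t|+1) :=
      ⟨by linarith [neg_abs_le t, hs.1], by linarith [le_abs_self t, hs.2]⟩
    have key : ∀ k, ‖x‖^k * ‖iteratedFDeriv ℝ m (ψ s) x‖ ≤ max (Cf k) 0 :=
      fun k => (hCf k s hsI x).trans (le_max_left _ _)
    have expand : (1+‖x‖:ℝ)^(n+1) = ∑ k ∈ Finset.range (n+2), ‖x‖^k * ((n+1).choose k : ℝ) := by
      rw [add_comm (1:ℝ) ‖x‖, add_pow]
      simp
    rw [expand, Finset.mul_sum]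
    apply Finset.sum_le_sum
    intro k _
    calc ‖iteratedFDeriv ℝ m (ψ s) x‖ * (‖x‖^k * ((n+1).choose k : ℝ))
        = ((n+1).choose k : ℝ) * (‖x‖^k * ‖iteratedFDeriv ℝ m (ψ s) x‖) := by ring
      _ ≤ ((n+1).choose k : ℝ) * max (Cf k) 0 :=
          mul_le_mul_of_nonneg_left (key k) (by positivity)

lemma norm_pd_le (f : EuclideanSpace ℝ (Fin n) → ℂ) (i : Fin n) (x) :
    ‖pd f i x‖ ≤ ‖iteratedFDeriv ℝ 1 f x‖ := by
  rw [← norm_iteratedFDeriv_fderiv (n := 0), norm_iteratedFDeriv_zero]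
  calc ‖pd f i x‖ ≤ ‖fderiv ℝ f x‖ * ‖EuclideanSpace.single i (1:ℝ)‖ :=
        (fderiv ℝ f x).le_opNorm _
    _ = ‖fderiv ℝ f x‖ := by rw [EuclideanSpace.norm_single]; simp

lemma pd_pd_eq {f : EuclideanSpace ℝ (Fin n) → ℂ} (hf : ContDiff ℝ (⊤ : ℕ∞) f) (i : Fin n) (x) :
    pd (fun y => pd f i y) i x
      = fderiv ℝ (fderiv ℝ f) x (EuclideanSpace.single i 1) (EuclideanSpace.single i 1) := by
  unfold pd
  rw [fderiv_clm_apply ((hf.fderiv_right (m := (⊤ : ℕ∞)) (by simp)).differentiable (by simp) x)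
    (differentiableAt_const _)]
  simp

lemma norm_pd_pd_le {f : EuclideanSpace ℝ (Fin n) → ℂ} (hf : ContDiff ℝ (⊤ : ℕ∞) f) (i : Fin n) (x) :
    ‖pd (fun y => pd f i y) i x‖ ≤ ‖iteratedFDeriv ℝ 2 f x‖ := by
  rw [pd_pd_eq hf]
  have h1 : ‖EuclideanSpace.single i (1:ℝ)‖ = 1 := by rw [EuclideanSpace.norm_single]; simp
  calc ‖fderiv ℝ (fderiv ℝ f) x (EuclideanSpace.single i 1) (EuclideanSpace.single i 1)‖
      ≤ ‖fderiv ℝ (fderiv ℝ f) x (EuclideanSpace.single i 1)‖ * 1 := by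
        simpa [h1] using (fderiv ℝ (fderiv ℝ f) x (EuclideanSpace.single i 1)).le_opNorm
          (EuclideanSpace.single i (1:ℝ))
    _ ≤ ‖fderiv ℝ (fderiv ℝ f) x‖ := by
        simpa [h1] using (fderiv ℝ (fderiv ℝ f) x).le_opNorm (EuclideanSpace.single i (1:ℝ))
    _ = ‖iteratedFDeriv ℝ 1 (fderiv ℝ f) x‖ := by
        rw [← norm_iteratedFDeriv_fderiv (n := 0), norm_iteratedFDeriv_zero]
    _ = ‖iteratedFDeriv ℝ 2 f x‖ := norm_iteratedFDeriv_fderiv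

lemma hasDerivAt_normSq_comp {u : ℝ → ℂ} {u' : ℂ} {s : ℝ} (hu : HasDerivAt u u' s) :
    HasDerivAt (fun r => ‖u r‖^2) (2 * ((starRingEnd ℂ) (u s) * u').re) s := by
  have hre : HasDerivAt (fun r => (u r).re) u'.re s := by
    exact Complex.reCLM.hasFDerivAt.comp_hasDerivAt s hu
  have him : HasDerivAt (fun r => (u r).im) u'.im s := by
    exact Complex.imCLM.hasFDerivAt.comp_hasDerivAt s hu
  have h := (hre.mul hre).add (him.mul him)
  have hfun : (fun r => ‖u r‖^2) = fun r => (u r).re*(u r).re + (u r).im*(u r).im := by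
    funext r
    rw [← Complex.normSq_apply, Complex.sq_norm]
  rw [hfun]
  refine h.congr_deriv ?_
  simp [Complex.mul_re, Complex.conj_re, Complex.conj_im]
  ring

end Helpers

set_option maxHeartbeats 2000000 in
/-- The integration-by-parts-in-time identity
`d/dt⟨ψ, Wψ⟩ = ⟨ψ, (∂ₜW)ψ⟩ + ⟨ψ, i[−Δ, W]ψ⟩`:
`m(t) = ∫ W(t,x)|ψ(t,x)|²` is differentiable with
`m'(t) = ∫ ∂ₜW |ψ|² + 2 Im ∫ conj(ψ) (∇ₓW·∇ₓψ)`. -/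
theorem potential_expectation_derivative {n : ℕ} (hn : 1 ≤ n)
    (V : EuclideanSpace ℝ (Fin n) → ℝ) (hV : ContDiff ℝ (⊤ : ℕ∞) V)
    (hVbd : ∀ m : ℕ, ∃ C : ℝ, ∀ x, ‖iteratedFDeriv ℝ m V x‖ ≤ C)
    (W : ℝ → EuclideanSpace ℝ (Fin n) → ℝ)
    (hW : ContDiff ℝ (⊤ : ℕ∞) (fun p : ℝ × EuclideanSpace ℝ (Fin n) => W p.1 p.2))
    (hWbd : ∀ m : ℕ, ∃ C : ℝ, ∀ p : ℝ × EuclideanSpace ℝ (Fin n),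
      ‖iteratedFDeriv ℝ m (fun q : ℝ × EuclideanSpace ℝ (Fin n) => W q.1 q.2) p‖ ≤ C)
    (ψ : ℝ → EuclideanSpace ℝ (Fin n) → ℂ)
    (hψ : ContDiff ℝ (⊤ : ℕ∞) (fun p : ℝ × EuclideanSpace ℝ (Fin n) => ψ p.1 p.2))
    (hS : LocUnifSchwartz ψ)
    (hS' : LocUnifSchwartz (fun t => tderiv ψ t))
    (heq : ∀ t x, Complex.I * tderiv ψ t x
      = -lap (ψ t) x + (V x : ℂ) * ψ t x + (W t x : ℂ) * ψ t x) :
    ∀ t : ℝ,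
      HasDerivAt (fun s => ∫ x : EuclideanSpace ℝ (Fin n), W s x * ‖ψ s x‖ ^ 2)
        ((∫ x : EuclideanSpace ℝ (Fin n),
            deriv (fun s => W s x) t * ‖ψ t x‖ ^ 2)
          + 2 * (∫ x : EuclideanSpace ℝ (Fin n),
              (starRingEnd ℂ) (ψ t x) *
                ∑ j, (fderiv ℝ (W t) x (EuclideanSpace.single j 1) : ℂ)
                  * pd (ψ t) j x).im) t := by
  intro t
  -- smoothness of slices
  have hWs : ∀ s : ℝ, ContDiff ℝ (⊤ : ℕ∞) (W s) := by
    intro s; exact hW.comp (contDiff_const.prodMk contDiff_id)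
  have hψs : ∀ s : ℝ, ContDiff ℝ (⊤ : ℕ∞) (ψ s) := by
    intro s; exact hψ.comp (contDiff_const.prodMk contDiff_id)
  have hWx : ∀ x, ContDiff ℝ (⊤ : ℕ∞) (fun s => W s x) := by
    intro x; exact hW.comp (contDiff_id.prodMk contDiff_const)
  have hψx : ∀ x, ContDiff ℝ (⊤ : ℕ∞) (fun s => ψ s x) := by
    intro x; exact hψ.comp (contDiff_id.prodMk contDiff_const)
  -- bounds on W
  obtain ⟨C₀, hC₀⟩ := hWbd 0
  have hWbd0 : ∀ s x, ‖W s x‖ ≤ C₀ := fun s x => by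
    simpa [norm_iteratedFDeriv_zero] using hC₀ (s, x)
  obtain ⟨C₁, hC₁⟩ := hWbd 1
  have hDWu : ∀ p : ℝ × EuclideanSpace ℝ (Fin n),
      ‖fderiv ℝ (fun q : ℝ × EuclideanSpace ℝ (Fin n) => W q.1 q.2) p‖ ≤ C₁ := fun p => by
    rw [← norm_iteratedFDeriv_zero
        (𝕜 := ℝ) (f := fderiv ℝ (fun q : ℝ × EuclideanSpace ℝ (Fin n) => W q.1 q.2)) (x := p),
      norm_iteratedFDeriv_fderiv]
    exact hC₁ p
  -- time derivatives exist
  have hψt_hasDeriv : ∀ s x, HasDerivAt (fun u => ψ u x) (tderiv ψ s x) s := by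
    intro s x
    exact ((hψx x).differentiable (by simp) s).hasDerivAt
  have hWt_hasDeriv : ∀ s x,
      HasDerivAt (fun u => W u x)
        (fderiv ℝ (fun q : ℝ × EuclideanSpace ℝ (Fin n) => W q.1 q.2) (s, x)
          ((1 : ℝ), (0 : EuclideanSpace ℝ (Fin n)))) s := by
    intro s x
    have hcurve : HasDerivAt (fun u : ℝ => (u, x)) ((1 : ℝ), (0 : EuclideanSpace ℝ (Fin n))) s :=
      (hasDerivAt_id s).prodMk (hasDerivAt_const s x)
    exact ((hW.differentiable (by simp) (s, x)).hasFDerivAt.comp_hasDerivAt s hcurve)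
  have hderivW_eq : ∀ s x, deriv (fun u => W u x) s
      = fderiv ℝ (fun q : ℝ × EuclideanSpace ℝ (Fin n) => W q.1 q.2) (s, x)
          ((1 : ℝ), (0 : EuclideanSpace ℝ (Fin n))) := fun s x =>
    (hWt_hasDeriv s x).deriv
  have hdWbd : ∀ s x, ‖deriv (fun u => W u x) s‖ ≤ C₁ := by
    intro s x
    rw [hderivW_eq]
    calc ‖fderiv ℝ (fun q : ℝ × EuclideanSpace ℝ (Fin n) => W q.1 q.2) (s, x)
          ((1 : ℝ), (0 : EuclideanSpace ℝ (Fin n)))‖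
        ≤ ‖fderiv ℝ (fun q : ℝ × EuclideanSpace ℝ (Fin n) => W q.1 q.2) (s, x)‖
            * ‖((1 : ℝ), (0 : EuclideanSpace ℝ (Fin n)))‖ := ContinuousLinearMap.le_opNorm _ _
      _ ≤ C₁ * 1 := by
          have h1 : ‖((1 : ℝ), (0 : EuclideanSpace ℝ (Fin n)))‖ ≤ 1 := by
            rw [Prod.norm_def]; simp
          exact mul_le_mul (hDWu (s, x)) h1 (norm_nonneg _) ((norm_nonneg _).trans (hDWu (s, x)))
      _ = C₁ := mul_one C₁

  -- decay constants
  obtain ⟨A0, hA0n, hA0'⟩ := locunif_decay hS 0 t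
  obtain ⟨B0, hB0n, hB0'⟩ := locunif_decay hS' 0 t
  have htIcc : t ∈ Set.Icc (t-1) (t+1) := by constructor <;> linarith
  have hw1 : ∀ x : EuclideanSpace ℝ (Fin n), (1:ℝ) ≤ (1+‖x‖)^(n+1) := fun x =>
    one_le_pow₀ (by linarith [norm_nonneg x])
  have hwpos : ∀ x : EuclideanSpace ℝ (Fin n), (0:ℝ) < (1+‖x‖)^(n+1) := fun x => by
    positivity
  have hA0 : ∀ s ∈ Set.Icc (t-1) (t+1), ∀ x, ‖ψ s x‖ * (1+‖x‖)^(n+1) ≤ A0 := by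
    intro s hs x; simpa [norm_iteratedFDeriv_zero] using hA0' s hs x
  have hB0 : ∀ s ∈ Set.Icc (t-1) (t+1), ∀ x, ‖tderiv ψ s x‖ * (1+‖x‖)^(n+1) ≤ B0 := by
    intro s hs x; simpa [norm_iteratedFDeriv_zero] using hB0' s hs x
  have hA0p : ∀ s ∈ Set.Icc (t-1) (t+1), ∀ x, ‖ψ s x‖ ≤ A0 := by
    intro s hs x
    nlinarith [hA0 s hs x, hw1 x, norm_nonneg (ψ s x)]
  have hC₀n : (0:ℝ) ≤ C₀ := le_trans (norm_nonneg _) (hWbd0 t 0)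
  have hC₁n : (0:ℝ) ≤ C₁ := le_trans (norm_nonneg _) (hdWbd t 0)
  -- the pointwise derivative
  set F' : ℝ → EuclideanSpace ℝ (Fin n) → ℝ := fun s x =>
    deriv (fun u => W u x) s * ‖ψ s x‖^2
      + W s x * (2 * ((starRingEnd ℂ) (ψ s x) * tderiv ψ s x).re) with hF'def
  have hFderiv : ∀ (x : EuclideanSpace ℝ (Fin n)) (s : ℝ),
      HasDerivAt (fun u => W u x * ‖ψ u x‖^2) (F' s x) s := by
    intro x s
    exact (((hWx x).differentiable (by simp) s).hasDerivAt).mul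
      (hasDerivAt_normSq_comp (hψt_hasDeriv s x))
  -- continuity facts
  have htd_eq : ∀ s x, tderiv ψ s x
      = fderiv ℝ (fun q : ℝ × EuclideanSpace ℝ (Fin n) => ψ q.1 q.2) (s, x)
        ((1 : ℝ), (0 : EuclideanSpace ℝ (Fin n))) := by
    intro s x
    have hcurve : HasDerivAt (fun u : ℝ => (u, x)) ((1 : ℝ), (0 : EuclideanSpace ℝ (Fin n))) s :=
      (hasDerivAt_id s).prodMk (hasDerivAt_const s x)
    exact ((hψ.differentiable (by simp) (s, x)).hasFDerivAt.comp_hasDerivAt s hcurve).deriv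
  have hconttd : Continuous (fun x => tderiv ψ t x) := by
    have heq2 : (fun x => tderiv ψ t x)
        = fun x => fderiv ℝ (fun q : ℝ × EuclideanSpace ℝ (Fin n) => ψ q.1 q.2) (t, x)
          ((1 : ℝ), (0 : EuclideanSpace ℝ (Fin n))) := funext fun x => htd_eq t x
    rw [heq2]
    exact (ContinuousLinearMap.apply ℝ ℂ
        ((1 : ℝ), (0 : EuclideanSpace ℝ (Fin n)))).continuous.comp
      (((hψ.fderiv_right (m := (⊤ : ℕ∞)) (by simp)).continuous).comp (Continuous.prodMk_right t))
  have hcontdW : Continuous (fun x => deriv (fun u => W u x) t) := by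
    have heq2 : (fun x => deriv (fun u => W u x) t)
        = fun x => fderiv ℝ (fun q : ℝ × EuclideanSpace ℝ (Fin n) => W q.1 q.2) (t, x)
          ((1 : ℝ), (0 : EuclideanSpace ℝ (Fin n))) := funext fun x => hderivW_eq t x
    rw [heq2]
    exact (ContinuousLinearMap.apply ℝ ℝ
        ((1 : ℝ), (0 : EuclideanSpace ℝ (Fin n)))).continuous.comp
      (((hW.fderiv_right (m := (⊤ : ℕ∞)) (by simp)).continuous).comp (Continuous.prodMk_right t))
  -- apply differentiation under the integral sign
  set K : ℝ := C₁*A0*A0 + 2*(C₀*(A0*B0)) with hKdef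
  have hballIcc : ∀ s ∈ Metric.ball t 1, s ∈ Set.Icc (t-1) (t+1) := by
    intro s hs
    rw [Metric.mem_ball, Real.dist_eq] at hs
    have := abs_lt.mp hs
    constructor <;> linarith [this.1, this.2]
  have meas1 : ∀ᶠ s in nhds t, AEStronglyMeasurable
      (fun x : EuclideanSpace ℝ (Fin n) => W s x * ‖ψ s x‖^2) volume := by
    filter_upwards with s
    exact (((hWs s).continuous).mul (((hψs s).continuous.norm).pow 2)).aestronglyMeasurable
  have int1 : Integrable (fun x : EuclideanSpace ℝ (Fin n) => W t x * ‖ψ t x‖^2) volume := by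
    apply integrable_of_decay
      (((hWs t).continuous).mul (((hψs t).continuous.norm).pow 2)).aestronglyMeasurable
      (C := C₀*(A0*A0))
    intro x
    calc ‖W t x * ‖ψ t x‖^2‖ * (1+‖x‖)^(n+1)
        = ‖W t x‖ * (‖ψ t x‖ * (‖ψ t x‖ * (1+‖x‖)^(n+1))) := by
          rw [norm_mul, norm_pow, norm_norm]; ring
      _ ≤ C₀ * (A0*A0) := by
          gcongr <;>
            first
              | exact hWbd0 t x
              | exact hA0p t htIcc x
              | exact hA0 t htIcc x
              | exact hA0n
              | exact hC₀n
              | exact norm_nonneg _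
              | positivity
  have meas2 : AEStronglyMeasurable (F' t) volume := by
    apply Continuous.aestronglyMeasurable
    apply (hcontdW.mul (((hψs t).continuous.norm).pow 2)).add
    apply ((hWs t).continuous).mul
    apply continuous_const.mul
    exact Complex.continuous_re.comp
      ((Complex.continuous_conj.comp (hψs t).continuous).mul hconttd)
  have bound1 : ∀ᵐ x : EuclideanSpace ℝ (Fin n) ∂volume, ∀ s ∈ Metric.ball t 1,
      ‖F' s x‖ ≤ K * ((1+‖x‖)^(n+1))⁻¹ := by
    filter_upwards with x
    intro s hs
    have hsI := hballIcc s hs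
    have h1 : ‖F' s x‖ ≤ C₁ * (‖ψ s x‖*‖ψ s x‖) + C₀ * (2 * (‖ψ s x‖ * ‖tderiv ψ s x‖)) := by
      apply (norm_add_le _ _).trans
      apply add_le_add
      · rw [norm_mul]
        apply mul_le_mul (hdWbd s x) _ (norm_nonneg _) hC₁n
        rw [norm_pow, norm_norm]
        exact le_of_eq (pow_two _)
      · rw [norm_mul]
        apply mul_le_mul (hWbd0 s x) _ (norm_nonneg _) hC₀n
        have h2 : ‖(2:ℝ)‖ = 2 := by norm_num
        rw [norm_mul, h2]
        apply mul_le_mul_of_nonneg_left _ (by norm_num : (0:ℝ) ≤ 2)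
        calc ‖(((starRingEnd ℂ) (ψ s x) * tderiv ψ s x).re : ℝ)‖
            ≤ ‖(starRingEnd ℂ) (ψ s x) * tderiv ψ s x‖ := by
              rw [Real.norm_eq_abs]
              exact Complex.abs_re_le_norm _
          _ = ‖ψ s x‖ * ‖tderiv ψ s x‖ := by
              rw [norm_mul, RCLike.norm_conj]
    have hw := hwpos x
    rw [← div_eq_mul_inv, le_div_iff₀ hw]
    calc ‖F' s x‖ * (1+‖x‖)^(n+1)
        ≤ (C₁ * (‖ψ s x‖*‖ψ s x‖) + C₀ * (2 * (‖ψ s x‖ * ‖tderiv ψ s x‖))) * (1+‖x‖)^(n+1) :=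
          mul_le_mul_of_nonneg_right h1 hw.le
      _ = C₁ * (‖ψ s x‖ * (‖ψ s x‖ * (1+‖x‖)^(n+1)))
            + 2*(C₀*(‖ψ s x‖ * (‖tderiv ψ s x‖ * (1+‖x‖)^(n+1)))) := by ring
      _ ≤ C₁ * (A0 * A0) + 2*(C₀*(A0 * B0)) := by
          gcongr <;>
            first
              | exact hA0p s hsI x
              | exact hA0 s hsI x
              | exact hB0 s hsI x
              | exact hA0n
              | exact hB0n
              | exact hC₀n
              | exact hC₁n
              | exact norm_nonneg _
              | positivity
      _ = K := by rw [hKdef]; ring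
  have bint : Integrable (fun x : EuclideanSpace ℝ (Fin n) => K * ((1+‖x‖)^(n+1))⁻¹)
      volume := by
    have hcont : Continuous fun x : EuclideanSpace ℝ (Fin n) => ((1+‖x‖)^(n+1))⁻¹ :=
      ((continuous_const.add continuous_norm).pow (n+1)).inv₀ (fun x => (hwpos x).ne')
    apply integrable_of_decay (continuous_const.mul hcont).aestronglyMeasurable (C := |K|)
    intro x
    have habs : ‖K * ((1+‖x‖)^(n+1))⁻¹‖ = |K| * ((1+‖x‖)^(n+1))⁻¹ := by
      rw [Real.norm_eq_abs, abs_mul, abs_of_pos (inv_pos.mpr (hwpos x))]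
    show ‖K * ((1+‖x‖)^(n+1))⁻¹‖ * (1+‖x‖)^(n+1) ≤ |K|
    rw [habs, mul_assoc, inv_mul_cancel₀ (hwpos x).ne', mul_one]
  have diff1 : ∀ᵐ x : EuclideanSpace ℝ (Fin n) ∂volume, ∀ s ∈ Metric.ball t 1,
      HasDerivAt (fun u => W u x * ‖ψ u x‖^2) (F' s x) s := by
    filter_upwards with x
    intro s _
    exact hFderiv x s
  obtain ⟨Fint, key⟩ := hasDerivAt_integral_of_dominated_loc_of_deriv_le (μ := volume)
    (Metric.ball_mem_nhds t one_pos) meas1 int1 meas2 bound1 bint diff1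
  -- === identity phase ===
  obtain ⟨A1, hA1n, hA1'⟩ := locunif_decay hS 1 t
  obtain ⟨A2, hA2n, hA2'⟩ := locunif_decay hS 2 t
  have plainOf : ∀ (a C : ℝ) (x : EuclideanSpace ℝ (Fin n)),
      0 ≤ a → a * (1+‖x‖)^(n+1) ≤ C → a ≤ C := by
    intro a C x ha h; nlinarith [hw1 x]
  have hpd1w : ∀ (j : Fin n) x, ‖pd (ψ t) j x‖ * (1+‖x‖)^(n+1) ≤ A1 := fun j x =>
    le_trans (mul_le_mul_of_nonneg_right (norm_pd_le (ψ t) j x) (hwpos x).le) (hA1' t htIcc x)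
  have hpd1 : ∀ (j : Fin n) x, ‖pd (ψ t) j x‖ ≤ A1 := fun j x =>
    plainOf _ _ x (norm_nonneg _) (hpd1w j x)
  have hpd2w : ∀ (j : Fin n) x, ‖pd (fun y => pd (ψ t) j y) j x‖ * (1+‖x‖)^(n+1) ≤ A2 :=
    fun j x => le_trans (mul_le_mul_of_nonneg_right (norm_pd_pd_le (hψs t) j x) (hwpos x).le)
      (hA2' t htIcc x)
  have hψ0w : ∀ x, ‖ψ t x‖ * (1+‖x‖)^(n+1) ≤ A0 := hA0 t htIcc
  have hψ0 : ∀ x, ‖ψ t x‖ ≤ A0 := hA0p t htIcc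
  -- smoothness / continuity facts
  have hpdcd : ∀ j : Fin n, ContDiff ℝ (⊤ : ℕ∞) (fun y => pd (ψ t) j y) := by
    intro j
    exact (ContinuousLinearMap.apply ℝ ℂ
      (EuclideanSpace.single j (1:ℝ))).contDiff.comp ((hψs t).fderiv_right (m := (⊤ : ℕ∞)) (by simp))
  have hconjcd : ContDiff ℝ (⊤ : ℕ∞) (fun y => (starRingEnd ℂ) (ψ t y)) := by
    exact (Complex.conjCLE : ℂ →L[ℝ] ℂ).contDiff.comp (hψs t)
  have hWccd : ContDiff ℝ (⊤ : ℕ∞) (fun y => ((W t y : ℝ) : ℂ)) := by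
    exact Complex.ofRealCLM.contDiff.comp (hWs t)
  have hDWtj : ∀ x : EuclideanSpace ℝ (Fin n), HasFDerivAt (W t)
      ((fderiv ℝ (fun q : ℝ × EuclideanSpace ℝ (Fin n) => W q.1 q.2) (t, x)).comp
        (ContinuousLinearMap.inr ℝ ℝ (EuclideanSpace ℝ (Fin n)))) x := by
    intro x
    have hmk : HasFDerivAt (fun y : EuclideanSpace ℝ (Fin n) => (t, y))
        (ContinuousLinearMap.inr ℝ ℝ (EuclideanSpace ℝ (Fin n))) x :=
      (hasFDerivAt_const t x).prodMk (hasFDerivAt_id x)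
    exact ((hW.differentiable (by simp) (t, x)).hasFDerivAt.comp x hmk)
  have hDWeq : ∀ (j : Fin n) x, fderiv ℝ (W t) x (EuclideanSpace.single j 1)
      = (fderiv ℝ (fun q : ℝ × EuclideanSpace ℝ (Fin n) => W q.1 q.2) (t, x))
        ((0 : ℝ), EuclideanSpace.single j 1) := by
    intro j x
    rw [(hDWtj x).fderiv]
    simp
  have hDWbd : ∀ (j : Fin n) x, ‖fderiv ℝ (W t) x (EuclideanSpace.single j 1)‖ ≤ C₁ := by
    intro j x
    rw [hDWeq j x]
    have h1 : ‖((0 : ℝ), EuclideanSpace.single j (1:ℝ))‖ ≤ 1 := by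
      rw [Prod.norm_def]
      simp [EuclideanSpace.norm_single]
    calc ‖(fderiv ℝ (fun q : ℝ × EuclideanSpace ℝ (Fin n) => W q.1 q.2) (t, x))
          ((0 : ℝ), EuclideanSpace.single j 1)‖
        ≤ ‖fderiv ℝ (fun q : ℝ × EuclideanSpace ℝ (Fin n) => W q.1 q.2) (t, x)‖
            * ‖((0 : ℝ), EuclideanSpace.single j (1:ℝ))‖ := ContinuousLinearMap.le_opNorm _ _
      _ ≤ C₁ * 1 := mul_le_mul (hDWu (t, x)) h1 (norm_nonneg _)
          ((norm_nonneg _).trans (hDWu (t, x)))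
      _ = C₁ := mul_one C₁
  have hDWcont : ∀ j : Fin n,
      Continuous (fun x => fderiv ℝ (W t) x (EuclideanSpace.single j 1)) := by
    intro j
    have heq2 : (fun x => fderiv ℝ (W t) x (EuclideanSpace.single j 1))
        = fun x => (fderiv ℝ (fun q : ℝ × EuclideanSpace ℝ (Fin n) => W q.1 q.2) (t, x))
          ((0 : ℝ), EuclideanSpace.single j 1) := funext fun x => hDWeq j x
    rw [heq2]
    exact (ContinuousLinearMap.apply ℝ ℝ
        ((0 : ℝ), EuclideanSpace.single j (1:ℝ))).continuous.comp
      (((hW.fderiv_right (m := (⊤ : ℕ∞)) (by simp)).continuous).comp (Continuous.prodMk_right t))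
  -- the function f = W(t,·) conj ψ(t,·) and its directional derivatives
  have hfdiff : Differentiable ℝ (fun x => ((W t x : ℝ) : ℂ) * (starRingEnd ℂ) (ψ t x)) :=
    (hWccd.mul hconjcd).differentiable (by simp)
  have hfcont : Continuous (fun x => ((W t x : ℝ) : ℂ) * (starRingEnd ℂ) (ψ t x)) :=
    (hWccd.mul hconjcd).continuous
  have hf_fderiv : ∀ (j : Fin n) x,
      fderiv ℝ (fun x => ((W t x : ℝ) : ℂ) * (starRingEnd ℂ) (ψ t x)) x
          (EuclideanSpace.single j 1)
        = ((W t x : ℝ) : ℂ) * (starRingEnd ℂ) (pd (ψ t) j x)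
          + (starRingEnd ℂ) (ψ t x)
              * ((fderiv ℝ (W t) x (EuclideanSpace.single j 1) : ℝ) : ℂ) := by
    intro j x
    have ha : HasFDerivAt (fun y => ((W t y : ℝ) : ℂ))
        (Complex.ofRealCLM.comp (fderiv ℝ (W t) x)) x :=
      Complex.ofRealCLM.hasFDerivAt.comp x ((hWs t).differentiable (by simp) x).hasFDerivAt
    have hb : HasFDerivAt (fun y => (starRingEnd ℂ) (ψ t y))
        ((Complex.conjCLE : ℂ →L[ℝ] ℂ).comp (fderiv ℝ (ψ t) x)) x :=
      (Complex.conjCLE : ℂ →L[ℝ] ℂ).hasFDerivAt.comp x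
        (((hψs t).differentiable (by simp)) x).hasFDerivAt
    rw [HasFDerivAt.fderiv (f := fun x => ((W t x : ℝ) : ℂ) * (starRingEnd ℂ) (ψ t x)) (ha.mul hb)]
    simp [pd, ContinuousLinearMap.smul_apply, ContinuousLinearMap.comp_apply, smul_eq_mul]
  have hfbd : ∀ x, ‖((W t x : ℝ) : ℂ) * (starRingEnd ℂ) (ψ t x)‖ ≤ C₀ * A0 := by
    intro x
    rw [norm_mul, Complex.norm_real, RCLike.norm_conj]
    exact mul_le_mul (hWbd0 t x) (hψ0 x) (norm_nonneg _) hC₀n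
  -- integrability of all the players
  have hfgint : ∀ j : Fin n, Integrable
      (fun x => (((W t x : ℝ) : ℂ) * (starRingEnd ℂ) (ψ t x)) * pd (ψ t) j x) volume := by
    intro j
    apply integrable_of_decay
      (hfcont.mul ((hpdcd j).continuous)).aestronglyMeasurable (C := (C₀*A0)*A1)
    intro x
    calc ‖(((W t x : ℝ) : ℂ) * (starRingEnd ℂ) (ψ t x)) * pd (ψ t) j x‖ * (1+‖x‖)^(n+1)
        = ‖((W t x : ℝ) : ℂ) * (starRingEnd ℂ) (ψ t x)‖ * (‖pd (ψ t) j x‖ * (1+‖x‖)^(n+1)) := by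
          rw [norm_mul]; ring
      _ ≤ (C₀*A0)*A1 := mul_le_mul (hfbd x) (hpd1w j x) (by positivity)
          (by positivity)
  have hfg'int : ∀ j : Fin n, Integrable
      (fun x => (((W t x : ℝ) : ℂ) * (starRingEnd ℂ) (ψ t x))
        * pd (fun y => pd (ψ t) j y) j x) volume := by
    intro j
    have hcont2 : Continuous (fun x => pd (fun y => pd (ψ t) j y) j x) :=
      ((ContinuousLinearMap.apply ℝ ℂ (EuclideanSpace.single j (1:ℝ))).contDiff.comp
        ((hpdcd j).fderiv_right (m := (⊤ : ℕ∞)) (by simp))).continuous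
    apply integrable_of_decay (hfcont.mul hcont2).aestronglyMeasurable (C := (C₀*A0)*A2)
    intro x
    calc ‖(((W t x : ℝ) : ℂ) * (starRingEnd ℂ) (ψ t x))
          * pd (fun y => pd (ψ t) j y) j x‖ * (1+‖x‖)^(n+1)
        = ‖((W t x : ℝ) : ℂ) * (starRingEnd ℂ) (ψ t x)‖
            * (‖pd (fun y => pd (ψ t) j y) j x‖ * (1+‖x‖)^(n+1)) := by
          rw [norm_mul]; ring
      _ ≤ (C₀*A0)*A2 := mul_le_mul (hfbd x) (hpd2w j x) (by positivity) (by positivity)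
  have hp1int : ∀ j : Fin n, Integrable
      (fun x => (((W t x : ℝ) : ℂ) * (starRingEnd ℂ) (pd (ψ t) j x)) * pd (ψ t) j x)
      volume := by
    intro j
    apply integrable_of_decay (((hWccd.continuous).mul
      (Complex.continuous_conj.comp (hpdcd j).continuous)).mul
      ((hpdcd j).continuous)).aestronglyMeasurable (C := (C₀*A1)*A1)
    intro x
    calc ‖(((W t x : ℝ) : ℂ) * (starRingEnd ℂ) (pd (ψ t) j x)) * pd (ψ t) j x‖ * (1+‖x‖)^(n+1)
        = (‖((W t x : ℝ) : ℂ)‖ * ‖(starRingEnd ℂ) (pd (ψ t) j x)‖)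
            * (‖pd (ψ t) j x‖ * (1+‖x‖)^(n+1)) := by
          rw [norm_mul, norm_mul]; ring
      _ ≤ (C₀*A1)*A1 := by
          apply mul_le_mul _ (hpd1w j x) (by positivity) (by positivity)
          rw [Complex.norm_real, RCLike.norm_conj]
          exact mul_le_mul (hWbd0 t x) (hpd1 j x) (norm_nonneg _) hC₀n
  have hp2int : ∀ j : Fin n, Integrable
      (fun x => ((starRingEnd ℂ) (ψ t x)
        * ((fderiv ℝ (W t) x (EuclideanSpace.single j 1) : ℝ) : ℂ)) * pd (ψ t) j x)
      volume := by
    intro j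
    apply integrable_of_decay (((Complex.continuous_conj.comp (hψs t).continuous).mul
      (Complex.continuous_ofReal.comp (hDWcont j))).mul
      ((hpdcd j).continuous)).aestronglyMeasurable (C := (A0*C₁)*A1)
    intro x
    calc ‖((starRingEnd ℂ) (ψ t x)
          * ((fderiv ℝ (W t) x (EuclideanSpace.single j 1) : ℝ) : ℂ)) * pd (ψ t) j x‖
            * (1+‖x‖)^(n+1)
        = (‖(starRingEnd ℂ) (ψ t x)‖ * ‖((fderiv ℝ (W t) x (EuclideanSpace.single j 1) : ℝ) : ℂ)‖)
            * (‖pd (ψ t) j x‖ * (1+‖x‖)^(n+1)) := by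
          rw [norm_mul, norm_mul]; ring
      _ ≤ (A0*C₁)*A1 := by
          apply mul_le_mul _ (hpd1w j x) (by positivity) (by positivity)
          rw [RCLike.norm_conj, Complex.norm_real]
          exact mul_le_mul (hψ0 x) (hDWbd j x) (norm_nonneg _) hA0n
  have hf'gint : ∀ j : Fin n, Integrable
      (fun x => fderiv ℝ (fun x => ((W t x : ℝ) : ℂ) * (starRingEnd ℂ) (ψ t x)) x
          (EuclideanSpace.single j 1) * pd (ψ t) j x) volume := by
    intro j
    have heq2 : (fun x => fderiv ℝ (fun x => ((W t x : ℝ) : ℂ) * (starRingEnd ℂ) (ψ t x)) x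
          (EuclideanSpace.single j 1) * pd (ψ t) j x)
        = fun x => (((W t x : ℝ) : ℂ) * (starRingEnd ℂ) (pd (ψ t) j x)) * pd (ψ t) j x
            + ((starRingEnd ℂ) (ψ t x)
                * ((fderiv ℝ (W t) x (EuclideanSpace.single j 1) : ℝ) : ℂ)) * pd (ψ t) j x := by
      funext x
      rw [hf_fderiv j x]
      ring
    rw [heq2]
    exact (hp1int j).add (hp2int j)
  have hhint : Integrable
      (fun x => (((W t x : ℝ) : ℂ) * (starRingEnd ℂ) (ψ t x)) * lap (ψ t) x) volume := by
    have hsum : Integrable (fun x => ∑ j : Fin n,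
        (((W t x : ℝ) : ℂ) * (starRingEnd ℂ) (ψ t x)) * pd (fun y => pd (ψ t) j y) j x)
        volume := integrable_finset_sum _ (fun j _ => hfg'int j)
    apply hsum.congr
    filter_upwards with x
    rw [lap, Finset.mul_sum]
  have hI1int : Integrable
      (fun x => deriv (fun u => W u x) t * ‖ψ t x‖^2) volume := by
    apply integrable_of_decay
      (hcontdW.mul (((hψs t).continuous.norm).pow 2)).aestronglyMeasurable (C := C₁*(A0*A0))
    intro x
    calc ‖deriv (fun u => W u x) t * ‖ψ t x‖^2‖ * (1+‖x‖)^(n+1)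
        = ‖deriv (fun u => W u x) t‖ * (‖ψ t x‖ * (‖ψ t x‖ * (1+‖x‖)^(n+1))) := by
          rw [norm_mul, norm_pow, norm_norm]; ring
      _ ≤ C₁ * (A0*A0) := by
          apply mul_le_mul (hdWbd t x) _ (by positivity) hC₁n
          exact mul_le_mul (hψ0 x) (hψ0w x) (by positivity) hA0n
  have hI2int : Integrable
      (fun x => W t x * (2 * ((starRingEnd ℂ) (ψ t x) * tderiv ψ t x).re)) volume := by
    apply (Fint.sub hI1int).congr
    filter_upwards with x
    simp only [Pi.sub_apply, hF'def]
    ring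
  -- pointwise : use the Schrödinger equation
  have hpt : ∀ x, W t x * (2 * ((starRingEnd ℂ) (ψ t x) * tderiv ψ t x).re)
      = -2 * (((((W t x : ℝ) : ℂ) * (starRingEnd ℂ) (ψ t x)) * lap (ψ t) x).im) := by
    intro x
    have hpde : tderiv ψ t x = Complex.I * lap (ψ t) x
        - Complex.I * ((V x : ℂ) * ψ t x) - Complex.I * ((W t x : ℂ) * ψ t x) := by
      linear_combination (-Complex.I) * heq t x + tderiv ψ t x * Complex.I_sq
    rw [hpde]
    simp only [Complex.mul_re, Complex.mul_im, Complex.sub_re, Complex.sub_im,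
      Complex.I_re, Complex.I_im, Complex.conj_re, Complex.conj_im,
      Complex.ofReal_re, Complex.ofReal_im]
    ring
  -- integration by parts in each coordinate
  have hIBP : ∀ j : Fin n,
      ∫ x, (((W t x : ℝ) : ℂ) * (starRingEnd ℂ) (ψ t x)) * pd (fun y => pd (ψ t) j y) j x
      = - ∫ x, fderiv ℝ (fun x => ((W t x : ℝ) : ℂ) * (starRingEnd ℂ) (ψ t x)) x
          (EuclideanSpace.single j 1) * pd (ψ t) j x := by
    intro j
    exact integral_mul_fderiv_eq_neg_fderiv_mul_of_integrable
      (hf'gint j) (hfg'int j) (hfgint j) (fun x _ => hfdiff x) (fun x _ => (hpdcd j).differentiable (by simp) x)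
  have him_p1 : ∀ j : Fin n,
      (∫ x, (((W t x : ℝ) : ℂ) * (starRingEnd ℂ) (pd (ψ t) j x)) * pd (ψ t) j x).im = 0 := by
    intro j
    have h := Complex.imCLM.integral_comp_comm (hp1int j)
    simp only [Complex.imCLM_apply] at h
    rw [← h]
    have hz : ∀ x : EuclideanSpace ℝ (Fin n),
        ((((W t x : ℝ) : ℂ) * (starRingEnd ℂ) (pd (ψ t) j x)) * pd (ψ t) j x).im = 0 := by
      intro x
      simp only [Complex.mul_im, Complex.mul_re, Complex.conj_re, Complex.conj_im,
        Complex.ofReal_re, Complex.ofReal_im]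
      ring
    simp [hz]
  have him_hh : (∫ x, (((W t x : ℝ) : ℂ) * (starRingEnd ℂ) (ψ t x)) * lap (ψ t) x).im
      = ∑ j : Fin n, -((∫ x, ((starRingEnd ℂ) (ψ t x)
          * ((fderiv ℝ (W t) x (EuclideanSpace.single j 1) : ℝ) : ℂ)) * pd (ψ t) j x).im) := by
    rw [show (fun x => (((W t x : ℝ) : ℂ) * (starRingEnd ℂ) (ψ t x)) * lap (ψ t) x)
        = fun x => ∑ j : Fin n,
          (((W t x : ℝ) : ℂ) * (starRingEnd ℂ) (ψ t x)) * pd (fun y => pd (ψ t) j y) j x from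
      funext fun x => by rw [lap, Finset.mul_sum]]
    rw [integral_finset_sum _ (fun j _ => hfg'int j), Complex.im_sum]
    apply Finset.sum_congr rfl
    intro j _
    rw [hIBP j]
    rw [show (fun x => fderiv ℝ (fun x => ((W t x : ℝ) : ℂ) * (starRingEnd ℂ) (ψ t x)) x
          (EuclideanSpace.single j 1) * pd (ψ t) j x)
        = fun x => (((W t x : ℝ) : ℂ) * (starRingEnd ℂ) (pd (ψ t) j x)) * pd (ψ t) j x
            + ((starRingEnd ℂ) (ψ t x)
                * ((fderiv ℝ (W t) x (EuclideanSpace.single j 1) : ℝ) : ℂ)) * pd (ψ t) j x from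
      funext fun x => by rw [hf_fderiv j x]; ring]
    rw [integral_add (hp1int j) (hp2int j), Complex.neg_im, Complex.add_im, him_p1 j, zero_add]
  -- final assembly
  have hfinal : (∫ x, F' t x)
      = (∫ x : EuclideanSpace ℝ (Fin n), deriv (fun s => W s x) t * ‖ψ t x‖ ^ 2)
        + 2 * (∫ x : EuclideanSpace ℝ (Fin n),
            (starRingEnd ℂ) (ψ t x) *
              ∑ j, (fderiv ℝ (W t) x (EuclideanSpace.single j 1) : ℂ)
                * pd (ψ t) j x).im := by
    have hstep1 : (∫ x, F' t x)
        = (∫ x, deriv (fun u => W u x) t * ‖ψ t x‖^2)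
          + ∫ x, W t x * (2 * ((starRingEnd ℂ) (ψ t x) * tderiv ψ t x).re) := by
      rw [← integral_add hI1int hI2int]
    rw [hstep1]
    congr 1
    have hstep2 : (∫ x, W t x * (2 * ((starRingEnd ℂ) (ψ t x) * tderiv ψ t x).re))
        = -2 * (∫ x, (((W t x : ℝ) : ℂ) * (starRingEnd ℂ) (ψ t x)) * lap (ψ t) x).im := by
      rw [show (fun x => W t x * (2 * ((starRingEnd ℂ) (ψ t x) * tderiv ψ t x).re))
          = fun x => -2 * (((((W t x : ℝ) : ℂ) * (starRingEnd ℂ) (ψ t x)) * lap (ψ t) x).im) from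
        funext hpt]
      rw [MeasureTheory.integral_const_mul]
      congr 1
      have h := Complex.imCLM.integral_comp_comm hhint
      simp only [Complex.imCLM_apply] at h
      exact h
    rw [hstep2, him_hh]
    have hsplit : (∫ x : EuclideanSpace ℝ (Fin n),
          (starRingEnd ℂ) (ψ t x) *
            ∑ j, (fderiv ℝ (W t) x (EuclideanSpace.single j 1) : ℂ) * pd (ψ t) j x)
        = ∑ j : Fin n, ∫ x, ((starRingEnd ℂ) (ψ t x)
            * ((fderiv ℝ (W t) x (EuclideanSpace.single j 1) : ℝ) : ℂ)) * pd (ψ t) j x := by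
      rw [show (fun x : EuclideanSpace ℝ (Fin n) => (starRingEnd ℂ) (ψ t x) *
            ∑ j, (fderiv ℝ (W t) x (EuclideanSpace.single j 1) : ℂ) * pd (ψ t) j x)
          = fun x => ∑ j : Fin n, ((starRingEnd ℂ) (ψ t x)
              * ((fderiv ℝ (W t) x (EuclideanSpace.single j 1) : ℝ) : ℂ)) * pd (ψ t) j x from
        funext fun x => by rw [Finset.mul_sum]; exact Finset.sum_congr rfl fun j _ => by ring]
      exact integral_finset_sum _ (fun j _ => hp2int j)
    rw [hsplit, Complex.im_sum, Finset.sum_neg_distrib]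
    ring
  rw [← hfinal]
  exact key

end
end
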